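/- arXiv:1509.09077 — 6 statements merged into one kernel-verified Lean document; each statement's English description precedes it below -/
import Mathlib

section
/- A normalized sequence {x_n} in a Hilbert space contains a Riesz basic subsequence if and only if it contains a subsequence converging weakly to 0. -/
open Filter Topology

noncomputable section

/-- A sequence `v` in a complex Hilbert space is a *Riesz sequence* if there are constants
`0 < c ≤ C` with `c·Σ|aₙ|² ≤ ‖Σ aₙ vₙ‖² ≤ C·Σ|aₙ|²` for all finitely supported scalars. -/
def RieszSeq {H : Type*} [NormedAddCommGroup H] [InnerProductSpace ℂ H] (v : ℕ → H) : Prop :=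
  ∃ c C : ℝ, 0 < c ∧ c ≤ C ∧ ∀ (a : ℕ → ℂ) (s : Finset ℕ),
    c * ∑ n ∈ s, ‖a n‖ ^ 2 ≤ ‖∑ n ∈ s, a n • v n‖ ^ 2 ∧
      ‖∑ n ∈ s, a n • v n‖ ^ 2 ≤ C * ∑ n ∈ s, ‖a n‖ ^ 2

/-!
The upper Riesz bound yields Bessel's inequality `∑ ‖⟪vₙ, z⟫‖² ≤ C ‖z‖²`, so the coefficients
`⟪vₙ, z⟫` of a Riesz sequence tend to `0`. Conversely, a weakly null sequence has a subsequence
chosen inductively so that each new term is almost orthogonal to all earlier ones: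
`|⟪vₙ, vₘ⟫| ≤ min δₙ δₘ` for `n ≠ m`, with `∑ δ < 1`. For unit vectors, Schur's test then bounds
the off-diagonal part of `‖∑ aₙ vₙ‖²` by `(∑ δ) ∑ |aₙ|²`, which gives both Riesz bounds.
-/

open scoped InnerProductSpace ComplexConjugate

theorem Finset.sum_sum_mul_mul_min_le {ι : Type*} (s : Finset ι) (α : ι → ℝ) {δ : ι → ℝ}
    (hδ : ∀ i, 0 ≤ δ i) :
    ∑ i ∈ s, ∑ j ∈ s, α i * α j * min (δ i) (δ j) ≤ (∑ i ∈ s, α i ^ 2) * ∑ i ∈ s, δ i := by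
  have amgm : ∀ i j, α i * α j * min (δ i) (δ j) ≤ (α i ^ 2 * δ j + α j ^ 2 * δ i) / 2 := by
    intro i j
    have hi := min_le_left (δ i) (δ j)
    have hj := min_le_right (δ i) (δ j)
    have h0 : 0 ≤ min (δ i) (δ j) := le_min (hδ i) (hδ j)
    nlinarith [mul_nonneg (sq_nonneg (α i - α j)) h0,
      mul_le_mul_of_nonneg_left hi (sq_nonneg (α j)),
      mul_le_mul_of_nonneg_left hj (sq_nonneg (α i))]
  calc _ ≤ ∑ i ∈ s, ∑ j ∈ s, (α i ^ 2 * δ j + α j ^ 2 * δ i) / 2 :=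
        Finset.sum_le_sum fun i _ => Finset.sum_le_sum fun j _ => amgm i j
    _ = _ := by
      simp only [← Finset.sum_div, Finset.sum_add_distrib, ← Finset.mul_sum, ← Finset.sum_mul]
      ring

theorem Nat.exists_strictMono_forall_lt_of_eventually {Q : ℕ → ℕ → ℕ → Prop}
    (h : ∀ k N, ∀ᶠ m in atTop, ∀ i ≤ N, Q k i m) :
    ∃ ψ : ℕ → ℕ, StrictMono ψ ∧ ∀ i j, i < j → Q j (ψ i) (ψ j) := by
  choose f hf using fun k N => ((h (k + 1) N).and (eventually_gt_atTop N)).exists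
  let ψ : ℕ → ℕ := fun k => Nat.rec 0 (fun k ψk => f k ψk) k
  have hψ : StrictMono ψ := strictMono_nat_of_lt_succ fun k => (hf k (ψ k)).2
  refine ⟨ψ, hψ, fun i j hij => ?_⟩
  obtain ⟨k, rfl⟩ := Nat.exists_eq_add_one_of_ne_zero (Nat.ne_zero_of_lt hij)
  exact (hf k (ψ k)).1 _ (hψ.monotone (Nat.lt_succ_iff.mp hij))

section

variable {H : Type*} [NormedAddCommGroup H] [InnerProductSpace ℂ H]

theorem norm_sum_smul_sq_eq_sum_sum {ι : Type*} (s : Finset ι) (a : ι → ℂ) (v : ι → H) :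
    (‖∑ n ∈ s, a n • v n‖ ^ 2 : ℂ) = ∑ n ∈ s, ∑ m ∈ s, conj (a n) * a m * ⟪v n, v m⟫_ℂ := by
  refine (inner_self_eq_norm_sq_to_K (𝕜 := ℂ) (∑ n ∈ s, a n • v n)).symm.trans ?_
  rw [sum_inner]
  simp only [inner_sum, inner_smul_left, inner_smul_right, mul_left_comm, mul_assoc]

theorem rieszSeq_of_norm_inner_le_min {v : ℕ → H} (hv : ∀ n, ‖v n‖ = 1) {δ : ℕ → ℝ}
    (hδ0 : ∀ n, 0 ≤ δ n) (hδ : Summable δ) (hδ1 : ∑' n, δ n < 1)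
    (hvδ : ∀ n m, n ≠ m → ‖⟪v n, v m⟫_ℂ‖ ≤ min (δ n) (δ m)) : RieszSeq v := by
  set ε := ∑' n, δ n
  have hε0 : 0 ≤ ε := tsum_nonneg hδ0
  refine ⟨1 - ε, 1 + ε, by linarith, by linarith, fun a s => ?_⟩
  set T := ∑ n ∈ s, ‖a n‖ ^ 2
  have hgram : ∀ n m, ‖⟪v n, v m⟫_ℂ - if n = m then 1 else 0‖ ≤ min (δ n) (δ m) := by
    intro n m
    split_ifs with hnm
    · subst hnm
      simpa [inner_self_eq_norm_sq_to_K, hv] using hδ0 n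
    · simpa using hvδ n m hnm
  have hdiff : ((‖∑ n ∈ s, a n • v n‖ ^ 2 - T : ℝ) : ℂ)
      = ∑ n ∈ s, ∑ m ∈ s, conj (a n) * a m * (⟪v n, v m⟫_ℂ - if n = m then 1 else 0) := by
    push_cast
    simp [norm_sum_smul_sq_eq_sum_sum, mul_sub, Finset.sum_sub_distrib, T, RCLike.conj_mul]
  have key : |‖∑ n ∈ s, a n • v n‖ ^ 2 - T| ≤ ε * T := by
    rw [← Real.norm_eq_abs, ← Complex.norm_real, hdiff]
    calc _ ≤ ∑ n ∈ s, ∑ m ∈ s, ‖a n‖ * ‖a m‖ * min (δ n) (δ m) := by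
          refine (norm_sum_le _ _).trans (Finset.sum_le_sum fun n _ => ?_)
          refine (norm_sum_le _ _).trans (Finset.sum_le_sum fun m _ => ?_)
          rw [norm_mul, norm_mul, RCLike.norm_conj]
          gcongr
          exact hgram n m
      _ ≤ T * ∑ n ∈ s, δ n := Finset.sum_sum_mul_mul_min_le s _ hδ0
      _ ≤ ε * T := by
          rw [mul_comm]
          gcongr
          exact hδ.sum_le_tsum s fun n _ => hδ0 n
  constructor <;> nlinarith [abs_le.mp key]

theorem sum_norm_inner_sq_le {ι : Type*} {v : ι → H} {C : ℝ} (hC0 : 0 ≤ C)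
    (hC : ∀ (a : ι → ℂ) (s : Finset ι), ‖∑ n ∈ s, a n • v n‖ ^ 2 ≤ C * ∑ n ∈ s, ‖a n‖ ^ 2)
    (z : H) (s : Finset ι) : ∑ n ∈ s, ‖⟪v n, z⟫_ℂ‖ ^ 2 ≤ C * ‖z‖ ^ 2 := by
  set b : ι → ℂ := fun n => ⟪v n, z⟫_ℂ
  set T := ∑ n ∈ s, ‖b n‖ ^ 2
  set w := ∑ n ∈ s, b n • v n
  have hwz : ⟪w, z⟫_ℂ = T := by
    simp only [w, T, b, sum_inner, inner_smul_left, RCLike.conj_mul]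
    push_cast
    rfl
  have hTw : T ≤ ‖w‖ * ‖z‖ := by
    calc T = ‖⟪w, z⟫_ℂ‖ := by rw [hwz, Complex.norm_real, Real.norm_of_nonneg]; positivity
      _ ≤ ‖w‖ * ‖z‖ := norm_inner_le_norm w z
  have hw : ‖w‖ ^ 2 ≤ C * T := hC b s
  have hT0 : 0 ≤ T := by positivity
  nlinarith [mul_le_mul hTw hTw hT0 (by positivity), sq_nonneg (‖w‖ * ‖z‖),
    mul_nonneg hC0 (sq_nonneg ‖z‖)]

theorem RieszSeq.tendsto_inner_zero {v : ℕ → H} (hv : RieszSeq v) (z : H) :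
    Tendsto (fun n => ⟪v n, z⟫_ℂ) atTop (𝓝 0) := by
  obtain ⟨c, C, hc, hcC, hvC⟩ := hv
  have hsum : Summable fun n => ‖⟪v n, z⟫_ℂ‖ ^ 2 :=
    summable_of_sum_le (fun n => by positivity)
      (sum_norm_inner_sq_le (hc.le.trans hcC) (fun a s => (hvC a s).2) z)
  refine tendsto_zero_iff_norm_tendsto_zero.mpr ?_
  simpa [Real.sqrt_sq (norm_nonneg _)] using hsum.tendsto_atTop_zero.sqrt

theorem exists_strictMono_norm_inner_lt {u : ℕ → H}
    (hu : ∀ y, Tendsto (fun n => ⟪u n, y⟫_ℂ) atTop (𝓝 0)) {ε : ℕ → ℝ} (hε : ∀ k, 0 < ε k) :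
    ∃ ψ : ℕ → ℕ, StrictMono ψ ∧ ∀ i j, i < j → ‖⟪u (ψ j), u (ψ i)⟫_ℂ‖ < ε j := by
  refine Nat.exists_strictMono_forall_lt_of_eventually
    (Q := fun k i m => ‖⟪u m, u i⟫_ℂ‖ < ε k) fun k N => ?_
  refine (Set.finite_Iic N).eventually_all.mpr fun i _ => ?_
  exact (hu (u i)).norm.eventually (gt_mem_nhds (by simpa using hε k))

end

theorem stmt0_general {H : Type*} [NormedAddCommGroup H] [InnerProductSpace ℂ H] (x : ℕ → H)
    (hx : ∀ n, ‖x n‖ = 1) :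
    (∃ φ : ℕ → ℕ, StrictMono φ ∧ RieszSeq (x ∘ φ)) ↔
      (∃ φ : ℕ → ℕ, StrictMono φ ∧
        ∀ y : H, Tendsto (fun j => (inner ℂ (x (φ j)) y : ℂ)) atTop (nhds 0)) := by
  constructor
  · rintro ⟨φ, hφ, hR⟩
    exact ⟨φ, hφ, hR.tendsto_inner_zero⟩
  · rintro ⟨φ, hφ, hweak⟩
    set δ : ℕ → ℝ := fun n => 1 / 2 / 2 / 2 ^ n with hδ
    have hδ0 : ∀ n, 0 < δ n := fun n => by positivity
    have hδ_anti : Antitone δ := fun m n hmn => by simp only [hδ]; gcongr; norm_num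
    obtain ⟨ψ, hψ, hψδ⟩ := exists_strictMono_norm_inner_lt hweak hδ0
    refine ⟨φ ∘ ψ, hφ.comp hψ, rieszSeq_of_norm_inner_le_min (fun n => hx _)
      (fun n => (hδ0 n).le) (summable_geometric_two' _)
      (by rw [tsum_geometric_two']; norm_num) fun n m hnm => ?_⟩
    rw [← hδ_anti.map_max]
    rcases hnm.lt_or_gt with h | h
    · rw [max_eq_right h.le, norm_inner_symm]
      exact (hψδ n m h).le
    · rw [max_eq_left h.le]
      exact (hψδ m n h).le

/-- A normalized sequence in a separable Hilbert space contains a Riesz basic subsequence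
if and only if it contains a subsequence converging weakly to `0`. -/
theorem stmt0 {H : Type*} [NormedAddCommGroup H] [InnerProductSpace ℂ H] [CompleteSpace H]
    [TopologicalSpace.SeparableSpace H] (x : ℕ → H) (hx : ∀ n, ‖x n‖ = 1) :
    (∃ φ : ℕ → ℕ, StrictMono φ ∧ RieszSeq (x ∘ φ)) ↔
      (∃ φ : ℕ → ℕ, StrictMono φ ∧
        ∀ y : H, Tendsto (fun j => (inner ℂ (x (φ j)) y : ℂ)) atTop (nhds 0)) :=
  stmt0_general x hx
end
end

section
/- If {x_n} is a sequence of unit vectors in a Hilbert space whose Gram matrix G = (⟨x_k, x_l⟩) satisfies Σ_{l} Σ_{k ≠ l} |⟨x_k, x_l⟩|² < 1, then {x_n} is a Riesz sequence. -/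
/-!
Expanding `‖Σ aₙ xₙ‖²` along the Gram matrix `G = Id + G₀` gives `Σ |aₙ|² + ⟨G₀ a, a⟩`, and by
Cauchy–Schwarz `|⟨G₀ a, a⟩| ≤ ‖G₀‖_HS · Σ |aₙ|² = √S · Σ |aₙ|²` with `S < 1`.
Hence the Riesz bounds `1 - √S` and `1 + √S`.
-/

open Finset ComplexConjugate

section GramExpansion

variable {ι H : Type*} [NormedAddCommGroup H] [InnerProductSpace ℂ H]

theorem norm_sum_smul_sq_eq_re_sum_product (x : ι → H) (a : ι → ℂ) (s : Finset ι) :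
    ‖∑ n ∈ s, a n • x n‖ ^ 2 =
      (∑ p ∈ s ×ˢ s, conj (a p.1) * a p.2 * inner ℂ (x p.1) (x p.2)).re := by
  rw [@norm_sq_eq_re_inner ℂ, sum_product, sum_inner]
  simp only [inner_sum, inner_smul_left, inner_smul_right, mul_left_comm (a _), mul_assoc]
  rfl

theorem norm_sum_smul_sq_eq_sum_add_re_sum_offDiag [DecidableEq ι] (x : ι → H)
    (hx : ∀ n, ‖x n‖ = 1) (a : ι → ℂ) (s : Finset ι) :
    ‖∑ n ∈ s, a n • x n‖ ^ 2 = ∑ n ∈ s, ‖a n‖ ^ 2 +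
      (∑ p ∈ s.offDiag, conj (a p.1) * a p.2 * inner ℂ (x p.1) (x p.2)).re := by
  have hdiag : ∀ n, conj (a n) * a n * inner ℂ (x n) (x n) = ((‖a n‖ ^ 2 : ℝ) : ℂ) := by
    intro n
    rw [inner_self_eq_norm_sq_to_K, hx n, mul_comm (conj (a n)), Complex.mul_conj,
      Complex.normSq_eq_norm_sq]
    simp
  rw [norm_sum_smul_sq_eq_re_sum_product, ← diag_union_offDiag,
    sum_union (disjoint_diag_offDiag s), Complex.add_re, diag, sum_map]
  simp only [Function.Embedding.coeFn_mk, Function.diag, hdiag, ← Complex.ofReal_sum,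
    Complex.ofReal_re]

end GramExpansion

theorem abs_re_sum_offDiag_le {ι : Type*} [DecidableEq ι] (a : ι → ℂ) (g : ι × ι → ℂ)
    (s : Finset ι) :
    |(∑ p ∈ s.offDiag, conj (a p.1) * a p.2 * g p).re| ≤
      √(∑ p ∈ s.offDiag, ‖g p‖ ^ 2) * ∑ n ∈ s, ‖a n‖ ^ 2 := by
  set N := ∑ n ∈ s, ‖a n‖ ^ 2
  have hcoeff : ∑ p ∈ s.offDiag, (‖a p.1‖ * ‖a p.2‖) ^ 2 ≤ N ^ 2 :=
    calc ∑ p ∈ s.offDiag, (‖a p.1‖ * ‖a p.2‖) ^ 2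
        ≤ ∑ p ∈ s ×ˢ s, (‖a p.1‖ * ‖a p.2‖) ^ 2 :=
          sum_le_sum_of_subset_of_nonneg (subset_union_right.trans (diag_union_offDiag s).subset)
            fun _ _ _ => by positivity
      _ = N ^ 2 := by
          simp only [sum_product, mul_pow, ← mul_sum, ← sum_mul]
          exact (sq N).symm
  calc |(∑ p ∈ s.offDiag, conj (a p.1) * a p.2 * g p).re|
      ≤ ‖∑ p ∈ s.offDiag, conj (a p.1) * a p.2 * g p‖ := Complex.abs_re_le_norm _
    _ ≤ ∑ p ∈ s.offDiag, (‖a p.1‖ * ‖a p.2‖) * ‖g p‖ := by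
        refine (norm_sum_le _ _).trans_eq (sum_congr rfl fun p _ => ?_)
        rw [norm_mul, norm_mul, Complex.norm_conj]
    _ ≤ √(∑ p ∈ s.offDiag, (‖a p.1‖ * ‖a p.2‖) ^ 2) * √(∑ p ∈ s.offDiag, ‖g p‖ ^ 2) :=
        Real.sum_mul_le_sqrt_mul_sqrt _ _ _
    _ ≤ N * √(∑ p ∈ s.offDiag, ‖g p‖ ^ 2) := by
        gcongr
        calc √(∑ p ∈ s.offDiag, (‖a p.1‖ * ‖a p.2‖) ^ 2) ≤ √(N ^ 2) := Real.sqrt_le_sqrt hcoeff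
          _ = N := Real.sqrt_sq (sum_nonneg fun _ _ => by positivity)
    _ = √(∑ p ∈ s.offDiag, ‖g p‖ ^ 2) * N := mul_comm _ _

theorem sum_offDiag_le_tsum_offDiag {ι : Type*} [DecidableEq ι] {f : ι × ι → ℝ}
    (hf : ∀ p, 0 ≤ f p) (hsum : Summable fun p : ι × ι => if p.1 = p.2 then 0 else f p)
    (s : Finset ι) :
    ∑ p ∈ s.offDiag, f p ≤ ∑' p : ι × ι, if p.1 = p.2 then 0 else f p := by
  calc ∑ p ∈ s.offDiag, f p = ∑ p ∈ s.offDiag, if p.1 = p.2 then 0 else f p :=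
        sum_congr rfl fun p hp => (if_neg (mem_offDiag.1 hp).2.2).symm
    _ ≤ _ := hsum.sum_le_tsum _ fun p _ => by split_ifs <;> simp [hf]

theorem RieszSeq.of_abs_norm_sq_sub_le {H : Type*} [NormedAddCommGroup H]
    [InnerProductSpace ℂ H] {v : ℕ → H} {r : ℝ} (hr : r < 1)
    (h : ∀ (a : ℕ → ℂ) (s : Finset ℕ),
      |‖∑ n ∈ s, a n • v n‖ ^ 2 - ∑ n ∈ s, ‖a n‖ ^ 2| ≤ r * ∑ n ∈ s, ‖a n‖ ^ 2) :
    RieszSeq v := by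
  refine ⟨1 - r, 1 + r, by linarith, ?_, fun a s => ?_⟩
  · have h0 := h (fun _ => 1) {0}
    simp only [sum_singleton, one_smul, norm_one, one_pow, mul_one] at h0
    linarith [(abs_nonneg _).trans h0]
  · have hN : 0 ≤ ∑ n ∈ s, ‖a n‖ ^ 2 := sum_nonneg fun _ _ => by positivity
    obtain ⟨hlo, hhi⟩ := abs_le.1 (h a s)
    constructor <;> linarith

theorem stmt1_general {H : Type*} [NormedAddCommGroup H] [InnerProductSpace ℂ H]
    (x : ℕ → H) (hx : ∀ n, ‖x n‖ = 1)
    (hsum : Summable (fun p : ℕ × ℕ =>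
      if p.1 = p.2 then (0 : ℝ) else ‖(inner ℂ (x p.1) (x p.2) : ℂ)‖ ^ 2))
    (hlt : (∑' p : ℕ × ℕ,
      if p.1 = p.2 then (0 : ℝ) else ‖(inner ℂ (x p.1) (x p.2) : ℂ)‖ ^ 2) < 1) :
    RieszSeq x := by
  set S := ∑' p : ℕ × ℕ, if p.1 = p.2 then (0 : ℝ) else ‖(inner ℂ (x p.1) (x p.2) : ℂ)‖ ^ 2
  have hr : √S < 1 := (Real.sqrt_lt' one_pos).2 (by rwa [one_pow])
  refine RieszSeq.of_abs_norm_sq_sub_le hr fun a s => ?_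
  rw [norm_sum_smul_sq_eq_sum_add_re_sum_offDiag x hx, add_sub_cancel_left]
  refine (abs_re_sum_offDiag_le a _ s).trans ?_
  gcongr
  exact sum_offDiag_le_tsum_offDiag (fun _ => by positivity) hsum s

/-- If `{xₙ}` are unit vectors whose Gram matrix `G = (⟨x_k, x_l⟩)` satisfies
`Σ_l Σ_{k ≠ l} |⟨x_k, x_l⟩|² < 1`, then `{xₙ}` is a Riesz sequence. -/
theorem stmt1 {H : Type*} [NormedAddCommGroup H] [InnerProductSpace ℂ H] [CompleteSpace H]
    (x : ℕ → H) (hx : ∀ n, ‖x n‖ = 1)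
    (hsum : Summable (fun p : ℕ × ℕ =>
      if p.1 = p.2 then (0 : ℝ) else ‖(inner ℂ (x p.1) (x p.2) : ℂ)‖ ^ 2))
    (hlt : (∑' p : ℕ × ℕ,
      if p.1 = p.2 then (0 : ℝ) else ‖(inner ℂ (x p.1) (x p.2) : ℂ)‖ ^ 2) < 1) :
    RieszSeq x :=
  stmt1_general x hx hsum hlt
end

section
/- If a normalized sequence {x_n} in a Hilbert space is uniformly minimal and contains no Riesz subsequence, then {x_n} contains a subsequence {x_{n_k}} converging weakly to some x such that {x_{n_k} - x} is a Riesz sequence and x is not in the closed linear span of {x_{n_k} - x}. -/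
/-!
Uniform minimality separates the sequence: `‖xₙ - xₘ‖ ≥ 1/M` for `n ≠ m`, where `M` bounds the
biorthogonal system. By sequential Banach–Alaoglu a subsequence converges weakly to some `x₀`,
so `uₙ = xₙ - x₀` is weakly null and eventually of norm at least `1/(2M)`. Weak nullity lets a
diagonal extraction make the `u_{k_j}` almost orthogonal, `|⟪u_{k_i}, u_{k_j}⟫| ≲ 2^{-(i+j)}`,
which gives two-sided Riesz bounds, while also making `Σ_j |⟪x₀, u_{k_j}⟫|²` small compared with
`‖x₀‖²`. If `x₀ = 0` the subsequence of `x` itself would be Riesz, so `x₀ ≠ 0`; and on the span of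
the `u_{k_j}` the lower Riesz bound with Cauchy–Schwarz gives `|⟪x₀, w⟫| ≤ κ‖w‖` with `κ < ‖x₀‖`,
an inequality that passes to the closure and fails at `w = x₀`.
-/

open Filter Topology

noncomputable section

/-- A sequence is *uniformly minimal* if it admits a biorthogonal system of uniformly
bounded norms. -/
def UniformlyMinimal {H : Type*} [NormedAddCommGroup H] [InnerProductSpace ℂ H]
    (v : ℕ → H) : Prop :=
  ∃ (y : ℕ → H) (M : ℝ), (∀ n m, (inner ℂ (v n) (y m) : ℂ) = if n = m then 1 else 0) ∧
    ∀ m, ‖y m‖ ≤ M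

/-- A sequence is *minimal* if no element lies in the closed linear span of the others. -/
def MinimalSeq {H : Type*} [NormedAddCommGroup H] [InnerProductSpace ℂ H] (v : ℕ → H) : Prop :=
  ∀ m, v m ∉ closure ((Submodule.span ℂ (v '' {n | n ≠ m}) : Submodule ℂ H) : Set H)

theorem Filter.extraction_forall_of_eventually_of_forall_lt {P : ℕ → ℕ → Prop}
    {R : ℕ → ℕ → ℕ → Prop} (hP : ∀ j, ∀ᶠ n in atTop, P j n)
    (hR : ∀ j m, ∀ᶠ n in atTop, R j m n) :
    ∃ k : ℕ → ℕ, StrictMono k ∧ (∀ j, P j (k j)) ∧ ∀ i j, i < j → R j (k i) (k j) := by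
  have step : ∀ j p, ∃ n, p < n ∧ P j n ∧ ∀ m ≤ p, R j m n := fun j p =>
    ((eventually_gt_atTop p).and ((hP j).and
      ((eventually_all_finset (Finset.range (p + 1))).2 fun m _ => hR j m))).exists.imp
      fun n ⟨hpn, hPn, hRn⟩ => ⟨hpn, hPn, fun m hm => hRn m (Finset.mem_range_succ_iff.2 hm)⟩
  choose f hf_gt hf_P hf_R using step
  -- `k (j + 1)` only remembers `k j`, but this is enough: every earlier `k i` is at most `k j`.
  let k : ℕ → ℕ := fun j => Nat.rec (f 0 0) (fun j p => f (j + 1) p) j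
  have hk : StrictMono k := strictMono_nat_of_lt_succ fun j => hf_gt (j + 1) (k j)
  refine ⟨k, hk, fun j => ?_, fun i j hij => ?_⟩
  · cases j with
    | zero => exact hf_P 0 0
    | succ j => exact hf_P (j + 1) (k j)
  · obtain ⟨j, rfl⟩ : ∃ j', j = j' + 1 := ⟨j - 1, by omega⟩
    exact hf_R (j + 1) (k j) (k i) (hk.monotone (by omega))

theorem Pairwise.eventually_half_le_norm_sub {E : Type*} [SeminormedAddCommGroup E]
    {z : ℕ → E} {δ : ℝ} (hz : Pairwise fun i j => δ ≤ ‖z i - z j‖) (p : E) :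
    ∀ᶠ n in atTop, δ / 2 ≤ ‖z n - p‖ := by
  by_contra h
  have hfreq := frequently_atTop.1 (not_eventually.1 h)
  obtain ⟨n₁, -, h₁⟩ := hfreq 0
  obtain ⟨n₂, hn₂, h₂⟩ := hfreq (n₁ + 1)
  have hsep := hz (show n₁ ≠ n₂ by omega)
  have htri := norm_sub_le_norm_sub_add_norm_sub (z n₁) p (z n₂)
  rw [norm_sub_rev p] at htri
  linarith [not_le.1 h₁, not_le.1 h₂]

theorem exists_strictMono_tendsto_inner {𝕜 H : Type*} [RCLike 𝕜] [NormedAddCommGroup H]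
    [InnerProductSpace 𝕜 H] [CompleteSpace H] [TopologicalSpace.SeparableSpace H]
    {x : ℕ → H} {R : ℝ} (hx : ∀ n, ‖x n‖ ≤ R) :
    ∃ (ψ : ℕ → ℕ) (x₀ : H), StrictMono ψ ∧
      ∀ y, Tendsto (fun j => (inner 𝕜 (x (ψ j)) y : 𝕜)) atTop (𝓝 (inner 𝕜 x₀ y)) := by
  set f : ℕ → WeakDual 𝕜 H := fun n =>
    StrongDual.toWeakDual (InnerProductSpace.toDual 𝕜 H (x n))
  have hf : ∀ n, f n ∈ WeakDual.toStrongDual ⁻¹' Metric.closedBall 0 R := fun n => by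
    simpa [f] using hx n
  obtain ⟨a, -, ψ, hψ, hlim⟩ := WeakDual.isSeqCompact_closedBall 𝕜 H 0 R hf
  refine ⟨ψ, (InnerProductSpace.toDual 𝕜 H).symm (WeakDual.toStrongDual a), hψ, fun y => ?_⟩
  simpa [f, Function.comp_def] using (WeakDual.eval_continuous y).tendsto a |>.comp hlim

theorem abs_norm_sum_smul_sq_sub_le {𝕜 E ι : Type*} [RCLike 𝕜] [NormedAddCommGroup E]
    [InnerProductSpace 𝕜 E] [DecidableEq ι] (v : ι → E) (a : ι → 𝕜) (s : Finset ι) :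
    |‖∑ n ∈ s, a n • v n‖ ^ 2 - ∑ n ∈ s, ‖a n‖ ^ 2 * ‖v n‖ ^ 2| ≤
      ∑ n ∈ s, ∑ m ∈ s.erase n, ‖a n‖ * ‖a m‖ * ‖(inner 𝕜 (v n) (v m) : 𝕜)‖ := by
  have hexpand : ((‖∑ n ∈ s, a n • v n‖ ^ 2 - ∑ n ∈ s, ‖a n‖ ^ 2 * ‖v n‖ ^ 2 : ℝ) : 𝕜) =
      ∑ n ∈ s, ∑ m ∈ s.erase n, starRingEnd 𝕜 (a n) * a m * inner 𝕜 (v n) (v m) := by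
    push_cast
    rw [← inner_self_eq_norm_sq_to_K, sum_inner, ← Finset.sum_sub_distrib]
    refine Finset.sum_congr rfl fun n hn => ?_
    rw [inner_sum, ← Finset.add_sum_erase _ _ hn, inner_smul_left, inner_smul_right,
      inner_self_eq_norm_sq_to_K, ← RCLike.conj_mul, mul_assoc, add_sub_cancel_left]
    exact Finset.sum_congr rfl fun m _ => by rw [inner_smul_left, inner_smul_right]; ring
  calc |‖∑ n ∈ s, a n • v n‖ ^ 2 - ∑ n ∈ s, ‖a n‖ ^ 2 * ‖v n‖ ^ 2|
      = ‖∑ n ∈ s, ∑ m ∈ s.erase n, starRingEnd 𝕜 (a n) * a m * (inner 𝕜 (v n) (v m) : 𝕜)‖ := by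
        rw [← hexpand, RCLike.norm_ofReal]
    _ ≤ ∑ n ∈ s, ∑ m ∈ s.erase n, ‖a n‖ * ‖a m‖ * ‖(inner 𝕜 (v n) (v m) : 𝕜)‖ :=
        (norm_sum_le _ _).trans <| Finset.sum_le_sum fun n _ => (norm_sum_le _ _).trans_eq <|
          Finset.sum_congr rfl fun m _ => by rw [norm_mul, norm_mul, RCLike.norm_conj]

theorem Finset.sum_half_pow_le_two (s : Finset ℕ) : ∑ n ∈ s, (1 / 2 : ℝ) ^ n ≤ 2 :=
  (summable_geometric_two.sum_le_tsum s fun _ _ => by positivity).trans_eq tsum_geometric_two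

theorem sum_sum_erase_mul_le {a : ℕ → ℝ} {g : ℕ → ℕ → ℝ} {c : ℝ} (ha : ∀ n, 0 ≤ a n)
    (hc : 0 ≤ c) (hg : ∀ n m, n ≠ m → g n m ≤ c * (1 / 2) ^ (n + m)) (s : Finset ℕ) :
    ∑ n ∈ s, ∑ m ∈ s.erase n, a n * a m * g n m ≤ 2 * c * ∑ n ∈ s, a n ^ 2 := by
  set r : ℕ → ℝ := fun n => (1 / 2) ^ n
  have har : ∀ n, 0 ≤ a n * r n := fun n => mul_nonneg (ha n) (by positivity)
  have hcs : (∑ n ∈ s, a n * r n) ^ 2 ≤ (∑ n ∈ s, a n ^ 2) * 2 :=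
    (Finset.sum_mul_sq_le_sq_mul_sq s a r).trans <| by
      gcongr
      refine (Finset.sum_le_sum fun n _ => ?_).trans s.sum_half_pow_le_two
      rw [← pow_mul]
      exact pow_le_pow_of_le_one (by norm_num) (by norm_num) (by omega)
  calc ∑ n ∈ s, ∑ m ∈ s.erase n, a n * a m * g n m
      ≤ ∑ n ∈ s, ∑ m ∈ s.erase n, c * ((a n * r n) * (a m * r m)) := by
        refine Finset.sum_le_sum fun n _ => Finset.sum_le_sum fun m hm => ?_
        calc a n * a m * g n m ≤ a n * a m * (c * (1 / 2) ^ (n + m)) :=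
              mul_le_mul_of_nonneg_left (hg n m (Finset.ne_of_mem_erase hm).symm)
                (mul_nonneg (ha n) (ha m))
          _ = c * ((a n * r n) * (a m * r m)) := by simp only [r, pow_add]; ring
    _ ≤ ∑ n ∈ s, ∑ m ∈ s, c * ((a n * r n) * (a m * r m)) :=
        Finset.sum_le_sum fun n _ => Finset.sum_le_sum_of_subset_of_nonneg (s.erase_subset n)
          fun m _ _ => mul_nonneg hc (mul_nonneg (har n) (har m))
    _ = c * (∑ n ∈ s, a n * r n) ^ 2 := by
        rw [sq, Finset.sum_mul_sum, Finset.mul_sum]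
        simp only [Finset.mul_sum]
    _ ≤ 2 * c * ∑ n ∈ s, a n ^ 2 := by nlinarith

section Riesz

variable {H : Type*} [NormedAddCommGroup H] [InnerProductSpace ℂ H]

def RieszBounds (v : ℕ → H) (c C : ℝ) : Prop :=
  ∀ (a : ℕ → ℂ) (s : Finset ℕ), c * ∑ n ∈ s, ‖a n‖ ^ 2 ≤ ‖∑ n ∈ s, a n • v n‖ ^ 2 ∧
    ‖∑ n ∈ s, a n • v n‖ ^ 2 ≤ C * ∑ n ∈ s, ‖a n‖ ^ 2

theorem RieszBounds.rieszSeq {v : ℕ → H} {c C : ℝ} (h : RieszBounds v c C) (hc : 0 < c)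
    (hcC : c ≤ C) : RieszSeq v :=
  ⟨c, C, hc, hcC, h⟩

theorem rieszBounds_of_norm_inner_le {v : ℕ → H} {c b δ : ℝ} (hδ : 0 ≤ δ)
    (hlow : ∀ n, c + δ ≤ ‖v n‖ ^ 2) (hup : ∀ n, ‖v n‖ ^ 2 ≤ b)
    (hinner : ∀ i j, i ≠ j → ‖(inner ℂ (v i) (v j) : ℂ)‖ ≤ δ / 2 * (1 / 2) ^ (i + j)) :
    RieszBounds v c (b + δ) := by
  classical
  intro a s
  have hoff := (abs_norm_sum_smul_sq_sub_le v a s).trans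
    (sum_sum_erase_mul_le (fun n => norm_nonneg (a n)) (by positivity) hinner s)
  have hdiag_low : (c + δ) * ∑ n ∈ s, ‖a n‖ ^ 2 ≤ ∑ n ∈ s, ‖a n‖ ^ 2 * ‖v n‖ ^ 2 := by
    rw [Finset.mul_sum]
    exact Finset.sum_le_sum fun n _ => by rw [mul_comm]; gcongr; exact hlow n
  have hdiag_up : ∑ n ∈ s, ‖a n‖ ^ 2 * ‖v n‖ ^ 2 ≤ b * ∑ n ∈ s, ‖a n‖ ^ 2 := by
    rw [Finset.mul_sum]
    exact Finset.sum_le_sum fun n _ => by rw [mul_comm]; gcongr; exact hup n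
  constructor <;> linarith [abs_le.1 hoff]

section WeaklyNull

variable {u : ℕ → H} (hu : ∀ w, Tendsto (fun n => (inner ℂ (u n) w : ℂ)) atTop (𝓝 0))
  {c b : ℝ} (hc : 0 < c) (hlow : ∀ᶠ n in atTop, 2 * c ≤ ‖u n‖ ^ 2) (hup : ∀ n, ‖u n‖ ^ 2 ≤ b)
include hu hc hlow hup

theorem exists_strictMono_rieszBounds {P : ℕ → ℕ → Prop} (hP : ∀ j, ∀ᶠ n in atTop, P j n) :
    ∃ k : ℕ → ℕ, StrictMono k ∧ (∀ j, P j (k j)) ∧ RieszBounds (fun j => u (k j)) c (b + c) := by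
  have hR : ∀ j m, ∀ᶠ n in atTop,
      ‖(inner ℂ (u m) (u n) : ℂ)‖ ≤ c / 2 * (1 / 2) ^ (m + j) := fun j m => by
    have hlim : Tendsto (fun n => ‖(inner ℂ (u m) (u n) : ℂ)‖) atTop (𝓝 0) := by
      simpa [norm_inner_symm (u m)] using (hu (u m)).norm
    exact hlim.eventually (ge_mem_nhds (mul_pos (half_pos hc) (by positivity)))
  obtain ⟨k, hk, hPk, hRk⟩ := extraction_forall_of_eventually_of_forall_lt
    (fun j => (hP j).and hlow) hR
  have hlt : ∀ i j, i < j → ‖(inner ℂ (u (k i)) (u (k j)) : ℂ)‖ ≤ c / 2 * (1 / 2) ^ (i + j) :=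
    fun i j hij => (hRk i j hij).trans <| mul_le_mul_of_nonneg_left
      (pow_le_pow_of_le_one (by norm_num) (by norm_num) (Nat.add_le_add_right (hk.id_le i) j))
      (half_pos hc).le
  refine ⟨k, hk, fun j => (hPk j).1, rieszBounds_of_norm_inner_le hc.le
    (fun j => by linarith [(hPk j).2]) (fun j => hup (k j)) fun i j hij => ?_⟩
  rcases hij.lt_or_gt with h | h
  · exact hlt i j h
  · simpa only [norm_inner_symm (u (k i)), add_comm j i] using hlt j i h

theorem exists_strictMono_rieszBounds_sum_norm_inner_sq_le (z : H) :
    ∃ k : ℕ → ℕ, StrictMono k ∧ RieszBounds (fun j => u (k j)) c (b + c) ∧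
      ∀ s : Finset ℕ, ∑ j ∈ s, ‖(inner ℂ z (u (k j)) : ℂ)‖ ^ 2 ≤ c * ‖z‖ ^ 2 / 2 := by
  have hP : ∀ j, ∀ᶠ n in atTop,
      ‖(inner ℂ z (u n) : ℂ)‖ ^ 2 ≤ c * ‖z‖ ^ 2 / 4 * (1 / 2) ^ j := fun j => by
    rcases eq_or_ne z 0 with rfl | hz
    · simp
    have hlim : Tendsto (fun n => ‖(inner ℂ z (u n) : ℂ)‖ ^ 2) atTop (𝓝 0) := by
      simpa [norm_inner_symm z] using (hu z).norm.pow 2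
    exact hlim.eventually (ge_mem_nhds (by have := norm_pos_iff.2 hz; positivity))
  obtain ⟨k, hk, hPk, hR⟩ := exists_strictMono_rieszBounds hu hc hlow hup hP
  refine ⟨k, hk, hR, fun s => ?_⟩
  calc ∑ j ∈ s, ‖(inner ℂ z (u (k j)) : ℂ)‖ ^ 2
      ≤ ∑ j ∈ s, c * ‖z‖ ^ 2 / 4 * (1 / 2) ^ j := Finset.sum_le_sum fun j _ => hPk j
    _ ≤ c * ‖z‖ ^ 2 / 4 * 2 := by rw [← Finset.mul_sum]; gcongr; exact s.sum_half_pow_le_two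
    _ = c * ‖z‖ ^ 2 / 2 := by ring

end WeaklyNull

end Riesz

theorem notMem_closure_span_of_sum_norm_inner_sq_le {𝕜 E : Type*} [RCLike 𝕜]
    [NormedAddCommGroup E] [InnerProductSpace 𝕜 E] {v : ℕ → E} {z : E} {c B : ℝ}
    (hv : ∀ (a : ℕ → 𝕜) (s : Finset ℕ), c * ∑ n ∈ s, ‖a n‖ ^ 2 ≤ ‖∑ n ∈ s, a n • v n‖ ^ 2)
    (hB : ∀ s : Finset ℕ, ∑ n ∈ s, ‖(inner 𝕜 z (v n) : 𝕜)‖ ^ 2 ≤ B) (hz : B < c * ‖z‖ ^ 2) :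
    z ∉ closure (Submodule.span 𝕜 (Set.range v) : Set E) := by
  have hB0 : 0 ≤ B := by simpa using hB ∅
  have hc : 0 < c := pos_of_mul_pos_left (hB0.trans_lt hz) (by positivity)
  -- Cauchy–Schwarz and the lower Riesz bound make `w ↦ ⟪z, w⟫` small on the span.
  have hspan : (Submodule.span 𝕜 (Set.range v) : Set E) ⊆
      {w | c * ‖(inner 𝕜 z w : 𝕜)‖ ^ 2 ≤ B * ‖w‖ ^ 2} := by
    intro w hw
    obtain ⟨a, rfl⟩ := Finsupp.mem_span_range_iff_exists_finsupp.1 hw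
    show c * ‖(inner 𝕜 z (∑ n ∈ a.support, a n • v n) : 𝕜)‖ ^ 2 ≤
      B * ‖∑ n ∈ a.support, a n • v n‖ ^ 2
    have hcs : ‖(inner 𝕜 z (∑ n ∈ a.support, a n • v n) : 𝕜)‖ ^ 2 ≤
        (∑ n ∈ a.support, ‖a n‖ ^ 2) * B :=
      calc ‖(inner 𝕜 z (∑ n ∈ a.support, a n • v n) : 𝕜)‖ ^ 2
          ≤ (∑ n ∈ a.support, ‖a n‖ * ‖(inner 𝕜 z (v n) : 𝕜)‖) ^ 2 := by
            gcongr
            simp only [inner_sum, inner_smul_right, ← norm_mul]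
            exact norm_sum_le _ _
        _ ≤ (∑ n ∈ a.support, ‖a n‖ ^ 2) * ∑ n ∈ a.support, ‖(inner 𝕜 z (v n) : 𝕜)‖ ^ 2 :=
            Finset.sum_mul_sq_le_sq_mul_sq _ _ _
        _ ≤ (∑ n ∈ a.support, ‖a n‖ ^ 2) * B := by gcongr; exact hB _
    nlinarith [mul_le_mul_of_nonneg_right (hv a a.support) hB0]
  intro hmem
  have hzz := closure_minimal hspan
    (isClosed_le (by fun_prop) (by fun_prop)) hmem
  simp only [Set.mem_ofPred_eq, inner_self_eq_norm_sq_to_K, norm_pow, RCLike.norm_ofReal,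
    abs_norm] at hzz
  nlinarith [sq_nonneg ‖z‖]

theorem UniformlyMinimal.exists_pairwise_le_norm_sub {H : Type*} [NormedAddCommGroup H]
    [InnerProductSpace ℂ H] {v : ℕ → H} (hv : UniformlyMinimal v) :
    ∃ δ > 0, Pairwise fun n m => δ ≤ ‖v n - v m‖ := by
  obtain ⟨y, M, hbi, hM⟩ := hv
  have key : ∀ n m, n ≠ m → 1 ≤ ‖v n - v m‖ * M := fun n m hnm => by
    have h := norm_inner_le_norm (𝕜 := ℂ) (v n - v m) (y m)
    rw [inner_sub_left, hbi, hbi, if_neg hnm, if_pos rfl, zero_sub, norm_neg, norm_one] at h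
    exact h.trans (by gcongr; exact hM m)
  have hMpos : 0 < M := pos_of_mul_pos_right (one_pos.trans_le (key 0 1 one_ne_zero.symm))
    (norm_nonneg _)
  exact ⟨1 / M, by positivity, fun n m hnm => (div_le_iff₀ hMpos).2 (key n m hnm)⟩

/-- If a normalized sequence `{xₙ}` in a separable Hilbert space is uniformly minimal and
contains no Riesz subsequence, then it contains a subsequence `{x_{n_k}}` converging weakly
to some `x₀` such that `{x_{n_k} - x₀}` is a Riesz sequence and `x₀` is not in the closed
linear span of `{x_{n_k} - x₀}`. -/
theorem stmt3 {H : Type*} [NormedAddCommGroup H] [InnerProductSpace ℂ H] [CompleteSpace H]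
    [TopologicalSpace.SeparableSpace H] (x : ℕ → H) (hx : ∀ n, ‖x n‖ = 1)
    (hum : UniformlyMinimal x)
    (hnr : ¬ ∃ φ : ℕ → ℕ, StrictMono φ ∧ RieszSeq (x ∘ φ)) :
    ∃ (φ : ℕ → ℕ) (x0 : H), StrictMono φ ∧
      (∀ y : H, Tendsto (fun j => (inner ℂ (x (φ j)) y : ℂ)) atTop (nhds (inner ℂ x0 y))) ∧
      RieszSeq (fun j => x (φ j) - x0) ∧
      x0 ∉ closure
        ((Submodule.span ℂ (Set.range fun j => x (φ j) - x0) : Submodule ℂ H) : Set H) := by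
  obtain ⟨δ, hδ, hsep⟩ := hum.exists_pairwise_le_norm_sub
  obtain ⟨ψ, x₀, hψ, hweak⟩ := exists_strictMono_tendsto_inner (𝕜 := ℂ) (fun n => (hx n).le)
  set u : ℕ → H := fun n => x (ψ n) - x₀
  have hu : ∀ w, Tendsto (fun n => (inner ℂ (u n) w : ℂ)) atTop (𝓝 0) := fun w => by
    simpa [u, inner_sub_left] using (hweak w).sub_const (inner ℂ x₀ w)
  set c : ℝ := δ ^ 2 / 8 with hc_def
  have hc : 0 < c := by positivity
  have hlow : ∀ᶠ n in atTop, 2 * c ≤ ‖u n‖ ^ 2 :=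
    ((hsep.comp_of_injective hψ.injective).eventually_half_le_norm_sub x₀).mono
      fun n hn => by
        have := pow_le_pow_left₀ (by positivity) hn 2
        rw [hc_def]
        linarith
  have hup : ∀ n, ‖u n‖ ^ 2 ≤ (1 + ‖x₀‖) ^ 2 := fun n => by
    rw [← hx (ψ n)]
    gcongr
    exact norm_sub_le _ _
  obtain ⟨k, hk, hR, hsmall⟩ :=
    exists_strictMono_rieszBounds_sum_norm_inner_sq_le hu hc hlow hup x₀
  have hcC : c ≤ (1 + ‖x₀‖) ^ 2 + c := le_add_of_nonneg_left (sq_nonneg _)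
  have hx₀ : x₀ ≠ 0 := by
    rintro rfl
    exact hnr ⟨ψ ∘ k, hψ.comp hk, by simpa [u, Function.comp_def] using hR.rieszSeq hc hcC⟩
  refine ⟨ψ ∘ k, x₀, hψ.comp hk, fun y => (hweak y).comp hk.tendsto_atTop, hR.rieszSeq hc hcC,
    notMem_closure_span_of_sum_norm_inner_sq_le (fun a s => (hR a s).1) hsmall ?_⟩
  linarith [mul_pos hc (pow_pos (norm_pos_iff.2 hx₀) 2)]
end
end

section
/- Let θ be inner on 𝔻 and λ_n → ζ ∈ 𝕋. If the system of reproducing kernels {k_{λ_n}} of K_θ is overcomplete (every subsequence is complete in K_θ), then sup_n ‖k_{λ_n}‖ < ∞, and consequently ζ is an Ahern–Clark point of θ (θ has an angular derivative in the sense of Carathéodory at ζ). -/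
/-!
If the norms `‖k_{λₙ}‖` were unbounded, then along a subsequence the normalized kernels
`k_{λₙ} / ‖k_{λₙ}‖` would tend weakly to zero: for `f` continuous on the closed disc,
`⟪k_λ, f⟫ = f(λ)` stays bounded as `λ → ζ`, and such `f` are dense in `K_θ`. A weakly null
sequence of unit vectors has an almost orthogonal subsequence, `|⟪uᵢ, uⱼ⟫| ≤ εᵢ εⱼ` with
`∑ εᵢ² < 1`. Such a family satisfies a lower Riesz bound, so its first vector stays at positive
distance from the span of the others, against overcompleteness. Once `‖k_{λₙ}‖ ≤ M`, the identity
`‖k_λ‖² = (1 - |θ(λ)|²) / (1 - |λ|²)` bounds the Julia quotient by `2M²` along `λₙ → ζ`.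
-/

open Filter Topology MeasureTheory

noncomputable section

/-- A sequence of vectors is *overcomplete* if every subsequence has dense linear span. -/
def Overcomplete {H : Type*} [NormedAddCommGroup H] [InnerProductSpace ℂ H] (v : ℕ → H) : Prop :=
  ∀ φ : ℕ → ℕ, StrictMono φ → Dense ((Submodule.span ℂ (Set.range (v ∘ φ)) : Submodule ℂ H) : Set H)

/-- The Stolz angle `Γ_γ(ζ) = {z ∈ 𝔻 : |z - ζ| ≤ γ(1 - |z|)}` at a boundary point `ζ`. -/
def Stolz (γ : ℝ) (ζ : ℂ) : Set ℂ :=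
  {z | z ∈ Metric.ball (0 : ℂ) 1 ∧ ‖z - ζ‖ ≤ γ * (1 - ‖z‖)}

/-- `ζ ∈ 𝕋` is an *Ahern–Clark (Julia–Carathéodory) point* of the inner function `θ`:
the Julia quotient `(1-|θ(z)|)/(1-|z|)` has finite liminf as `z → ζ` in `𝔻`; by the
Julia–Carathéodory theorem this is equivalent to `θ` having a unimodular nontangential
boundary value and a finite angular derivative at `ζ`. -/
def AhernClarkPoint (θ : ℂ → ℂ) (ζ : ℂ) : Prop :=
  ∃ M : ℝ, ∃ᶠ z in nhdsWithin ζ (Metric.ball (0 : ℂ) 1),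
    (1 - ‖θ z‖) / (1 - ‖z‖) ≤ M

/-- `K` (together with the injection `J` into functions on `ℂ` and the kernel map `k`) is the
model space `K_θ = H² ⊖ θH²` of the inner function `θ` on the unit disc: `θ` is inner
(bounded analytic with unimodular radial limits a.e.), elements of `K` are analytic on `𝔻`,
`k λ` is the reproducing kernel at `λ` given by the explicit formula
`k_λ(z) = (1 - conj(θ(λ))θ(z))/(1 - conj(λ)z)`, and (Aleksandrov) the functions extending
continuously to the closed disc are dense in `K`. -/
structure IsModelSpace {K : Type*} [NormedAddCommGroup K] [InnerProductSpace ℂ K]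
    [CompleteSpace K] (θ : ℂ → ℂ) (J : K →ₗ[ℂ] (ℂ → ℂ)) (k : ℂ → K) : Prop where
  theta_diff : DifferentiableOn ℂ θ (Metric.ball 0 1)
  theta_bdd : ∀ z ∈ Metric.ball (0 : ℂ) 1, ‖θ z‖ ≤ 1
  theta_unimod : ∀ᵐ (t : ℝ) ∂(volume : Measure ℝ),
    Tendsto (fun r : ℝ => ‖θ ((r : ℂ) * Complex.exp ((t : ℂ) * Complex.I))‖)
      (nhdsWithin 1 (Set.Iio 1)) (nhds 1)
  J_inj : Function.Injective J
  anal : ∀ f : K, DifferentiableOn ℂ (J f) (Metric.ball 0 1)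
  repro : ∀ (f : K) (l : ℂ), l ∈ Metric.ball (0 : ℂ) 1 → J f l = (inner ℂ (k l) f : ℂ)
  kernel_eq : ∀ l ∈ Metric.ball (0 : ℂ) 1, ∀ z ∈ Metric.ball (0 : ℂ) 1,
    J (k l) z = (1 - (starRingEnd ℂ) (θ l) * θ z) / (1 - (starRingEnd ℂ) l * z)
  dense_cont : Dense {f : K | ∃ g : ℂ → ℂ, ContinuousOn g (Metric.closedBall 0 1) ∧
    Set.EqOn g (J f) (Metric.ball 0 1)}

open scoped InnerProductSpace NNReal

theorem exists_strictMono_natCast_lt_of_not_bddAbove {a : ℕ → ℝ} (h : ¬BddAbove (Set.range a)) :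
    ∃ φ : ℕ → ℕ, StrictMono φ ∧ ∀ n : ℕ, (n : ℝ) < a (φ n) := by
  refine extraction_forall_of_frequently (P := fun n m => (n : ℝ) < a m) fun n => ?_
  by_contra hfreq
  rw [not_frequently] at hfreq
  exact h (IsBoundedUnder.bddAbove_range ⟨n, hfreq.mono fun m hm => not_lt.mp hm⟩)

section AlmostOrthogonal

variable {𝕜 E : Type*} [RCLike 𝕜] [NormedAddCommGroup E] [InnerProductSpace 𝕜 E]

theorem sum_norm_sq_sub_le_norm_sum_smul_sq {ι : Type*} {v : ι → E} {ε : ι → ℝ}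
    (hv : ∀ i, ‖v i‖ = 1) (hε : Pairwise fun i j => ‖⟪v i, v j⟫_𝕜‖ ≤ ε i * ε j)
    (b : ι → 𝕜) (s : Finset ι) :
    ∑ i ∈ s, ‖b i‖ ^ 2 - (∑ i ∈ s, ‖b i‖ * ε i) ^ 2 ≤ ‖∑ i ∈ s, b i • v i‖ ^ 2 := by
  classical
  have hterm : ∀ i j, (if i = j then ‖b i‖ ^ 2 else 0) - ‖b i‖ * ε i * (‖b j‖ * ε j) ≤
      RCLike.re (starRingEnd 𝕜 (b i) * b j * ⟪v i, v j⟫_𝕜) := by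
    intro i j
    by_cases hij : i = j
    · subst hij
      have : starRingEnd 𝕜 (b i) * b i * ⟪v i, v i⟫_𝕜 = ((‖b i‖ ^ 2 : ℝ) : 𝕜) := by
        rw [inner_self_eq_norm_sq_to_K, hv, RCLike.conj_mul]; simp
      rw [if_pos rfl, this, RCLike.ofReal_re]
      nlinarith [sq_nonneg (‖b i‖ * ε i)]
    · calc (if i = j then ‖b i‖ ^ 2 else 0) - ‖b i‖ * ε i * (‖b j‖ * ε j)
          = -(‖b i‖ * ‖b j‖ * (ε i * ε j)) := by rw [if_neg hij]; ring
        _ ≤ -‖starRingEnd 𝕜 (b i) * b j * ⟪v i, v j⟫_𝕜‖ := by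
          rw [norm_mul, norm_mul, RCLike.norm_conj, neg_le_neg_iff]
          exact mul_le_mul_of_nonneg_left (hε hij) (by positivity)
        _ ≤ _ := neg_le_of_abs_le (RCLike.abs_re_le_norm _)
  have hexpand : ‖∑ i ∈ s, b i • v i‖ ^ 2 =
      ∑ i ∈ s, ∑ j ∈ s, RCLike.re (starRingEnd 𝕜 (b i) * b j * ⟪v i, v j⟫_𝕜) := by
    rw [@norm_sq_eq_re_inner 𝕜, sum_inner, map_sum]
    refine Finset.sum_congr rfl fun i _ => ?_
    rw [inner_smul_left, inner_sum, Finset.mul_sum, map_sum]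
    refine Finset.sum_congr rfl fun j _ => ?_
    rw [inner_smul_right, mul_assoc]
  rw [hexpand, sq, Finset.sum_mul_sum, ← Finset.sum_sub_distrib]
  refine le_trans ?_ (Finset.sum_le_sum fun i _ => Finset.sum_le_sum fun j _ => hterm i j)
  simp only [Finset.sum_sub_distrib, Finset.sum_ite_eq]
  rw [Finset.sum_congr rfl fun i hi => if_pos hi]

theorem one_sub_sum_sq_mul_le_norm_sum_smul_sq {ι : Type*} {v : ι → E} {ε : ι → ℝ}
    (hv : ∀ i, ‖v i‖ = 1) (hε : Pairwise fun i j => ‖⟪v i, v j⟫_𝕜‖ ≤ ε i * ε j)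
    (b : ι → 𝕜) (s : Finset ι) :
    (1 - ∑ i ∈ s, ε i ^ 2) * ∑ i ∈ s, ‖b i‖ ^ 2 ≤ ‖∑ i ∈ s, b i • v i‖ ^ 2 := by
  have hgram := sum_norm_sq_sub_le_norm_sum_smul_sq hv hε b s
  have hcs := Finset.sum_mul_sq_le_sq_mul_sq s (fun i => ‖b i‖) ε
  nlinarith

theorem notMem_closure_span_tail {v : ℕ → E} {ε : ℕ → ℝ} {c : ℝ} (hv : ∀ n, ‖v n‖ = 1)
    (hε : Pairwise fun i j => ‖⟪v i, v j⟫_𝕜‖ ≤ ε i * ε j)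
    (hsum : HasSum (fun n => ε n ^ 2) c) (hc : c < 1) :
    v 0 ∉ closure (Submodule.span 𝕜 (Set.range fun n => v (n + 1)) : Set E) := by
  suffices hfar : ∀ y ∈ Submodule.span 𝕜 (Set.range fun n => v (n + 1)), 1 - c ≤ ‖v 0 - y‖ ^ 2 by
    intro hmem
    have hclosed : IsClosed {y : E | 1 - c ≤ ‖v 0 - y‖ ^ 2} :=
      isClosed_le continuous_const (by fun_prop)
    have h00 : 1 - c ≤ ‖v 0 - v 0‖ ^ 2 := closure_minimal hfar hclosed hmem
    rw [sub_self, norm_zero] at h00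
    linarith
  intro y hy
  obtain ⟨a, rfl⟩ := Finsupp.mem_span_range_iff_exists_finsupp.mp hy
  let b : ℕ → 𝕜 := fun | 0 => 1 | n + 1 => -a n
  let s : Finset ℕ := insert 0 (a.support.map ⟨Nat.succ, Nat.succ_injective⟩)
  have h0 : 0 ∉ a.support.map ⟨Nat.succ, Nat.succ_injective⟩ := by simp
  have hcomb : v 0 - a.sum (fun n t => t • v (n + 1)) = ∑ n ∈ s, b n • v n := by
    simp [s, b, Finset.sum_insert h0, Finsupp.sum, sub_eq_add_neg]
  have hb : 1 ≤ ∑ n ∈ s, ‖b n‖ ^ 2 := by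
    rw [Finset.sum_insert h0]
    simp only [b, norm_one, one_pow, le_add_iff_nonneg_right]
    positivity
  have hεs : ∑ n ∈ s, ε n ^ 2 ≤ c := sum_le_hasSum s (fun n _ => sq_nonneg (ε n)) hsum
  rw [hcomb]
  nlinarith [one_sub_sum_sq_mul_le_norm_sum_smul_sq hv hε b s]

theorem tendsto_inner_zero_of_dense {ι : Type*} {l : Filter ι} {x : ι → E} {C : ℝ≥0}
    (hx : ∀ i, ‖x i‖₊ ≤ C) {D : Set E} (hD : Dense D)
    (h : ∀ f ∈ D, Tendsto (fun i => ⟪x i, f⟫_𝕜) l (𝓝 0)) (f : E) :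
    Tendsto (fun i => ⟪x i, f⟫_𝕜) l (𝓝 0) := by
  have hequi : Equicontinuous fun i (f : E) => ⟪x i, f⟫_𝕜 :=
    (LipschitzWith.uniformEquicontinuous _ C fun i =>
      (innerSL 𝕜 (x i)).lipschitz.weaken
        (by rw [← NNReal.coe_le_coe, coe_nnnorm, innerSL_apply_norm]; exact hx i)).equicontinuous
  have hclosed := hequi.isClosed_setOfPred_tendsto (l := l) (f := fun _ => (0 : 𝕜)) continuous_const
  have hsub : closure D ⊆ {f | Tendsto (fun i => ⟪x i, f⟫_𝕜) l (𝓝 0)} := closure_minimal h hclosed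
  exact hsub (hD.closure_eq ▸ Set.mem_univ f)

theorem exists_strictMono_norm_inner_le {u : ℕ → E}
    (hweak : ∀ f, Tendsto (fun n => ⟪u n, f⟫_𝕜) atTop (𝓝 0)) {ε : ℕ → ℝ} (hε : ∀ n, 0 < ε n)
    (hanti : Antitone ε) :
    ∃ ψ : ℕ → ℕ, StrictMono ψ ∧ Pairwise fun i j => ‖⟪u (ψ i), u (ψ j)⟫_𝕜‖ ≤ ε i * ε j := by
  -- Each new index is chosen almost orthogonal to all indices up to the previous one, with a
  -- tolerance set by that previous index; as `m ≤ ψ m`, it is at most `ε (m + 1) ^ 2`.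
  obtain ⟨ψ, -, hψ⟩ := exists_seq_of_forall_finset_exists (fun _ : ℕ => True)
      (fun a b => a < b ∧ ∀ c ≤ a, ‖⟪u c, u b⟫_𝕜‖ ≤ ε (a + 1) ^ 2) fun s _ => by
    have hev : ∀ᶠ n in atTop, ∀ a ∈ s, a < n ∧
        ∀ c ∈ Finset.range (a + 1), ‖⟪u c, u n⟫_𝕜‖ ≤ ε (a + 1) ^ 2 := by
      refine (eventually_all_finset s).mpr fun a _ => (eventually_gt_atTop a).and ?_
      refine (eventually_all_finset _).mpr fun c _ => ?_
      have hc : Tendsto (fun n => ‖⟪u c, u n⟫_𝕜‖) atTop (𝓝 0) := by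
        simpa [norm_inner_symm (u c)] using (hweak (u c)).norm
      exact hc.eventually_le_const (pow_pos (hε _) 2)
    obtain ⟨n, hn⟩ := hev.exists
    exact ⟨n, trivial, fun a ha =>
      ⟨(hn a ha).1, fun c hc => (hn a ha).2 c (Finset.mem_range.mpr (Nat.lt_succ_of_le hc))⟩⟩
  have hmono : StrictMono ψ := fun m n hmn => (hψ m n hmn).1
  have hlt : ∀ i j, i < j → ‖⟪u (ψ i), u (ψ j)⟫_𝕜‖ ≤ ε i * ε j := by
    intro i j hij
    obtain ⟨m, rfl⟩ : ∃ m, j = m + 1 := ⟨j - 1, by omega⟩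
    calc ‖⟪u (ψ i), u (ψ (m + 1))⟫_𝕜‖
        ≤ ε (ψ m + 1) ^ 2 := (hψ m (m + 1) m.lt_succ_self).2 _ (hmono.monotone (by omega))
      _ ≤ ε (m + 1) ^ 2 := by gcongr; exacts [(hε _).le, hanti (by simpa using hmono.id_le m)]
      _ ≤ ε i * ε (m + 1) := by rw [sq]; gcongr; exacts [(hε _).le, hanti (by omega)]
  refine ⟨ψ, hmono, fun i j hij => ?_⟩
  rcases hij.lt_or_gt with h | h
  · exact hlt i j h
  · rw [norm_inner_symm, mul_comm]
    exact hlt j i h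

theorem exists_strictMono_notMem_closure_span_tail {u : ℕ → E} (hu : ∀ n, ‖u n‖ = 1)
    (hweak : ∀ f, Tendsto (fun n => ⟪u n, f⟫_𝕜) atTop (𝓝 0)) :
    ∃ ψ : ℕ → ℕ, StrictMono ψ ∧
      u (ψ 0) ∉ closure (Submodule.span 𝕜 (Set.range fun n => u (ψ (n + 1))) : Set E) := by
  let ε : ℕ → ℝ := fun n => (1 / 2) ^ n / 2
  obtain ⟨ψ, hψ, horth⟩ := exists_strictMono_norm_inner_le hweak (ε := ε)
    (fun n => by positivity) fun m n hmn =>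
      div_le_div_of_nonneg_right (pow_le_pow_of_le_one (by norm_num) (by norm_num) hmn) (by norm_num)
  have hsq : (fun n => ε n ^ 2) = fun n => (1 / 4 : ℝ) ^ n / 4 := by
    ext n
    simp only [ε]
    rw [div_pow, ← pow_mul, mul_comm, pow_mul]
    norm_num
  have hsum : HasSum (fun n => ε n ^ 2) (1 / 3) := by
    have hval : (1 - 1 / 4 : ℝ)⁻¹ / 4 = 1 / 3 := by norm_num
    rw [hsq, ← hval]
    exact (hasSum_geometric_of_lt_one (by norm_num) (by norm_num)).div_const 4
  exact ⟨ψ, hψ, notMem_closure_span_tail (v := fun n => u (ψ n)) (fun n => hu (ψ n)) horth hsum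
    (by norm_num)⟩

end AlmostOrthogonal

section Overcomplete

variable {H : Type*} [NormedAddCommGroup H] [InnerProductSpace ℂ H]

theorem Overcomplete.comp_strictMono {v : ℕ → H} (hv : Overcomplete v) {φ : ℕ → ℕ}
    (hφ : StrictMono φ) : Overcomplete (v ∘ φ) :=
  fun ψ hψ => hv (φ ∘ ψ) (hφ.comp hψ)

theorem Overcomplete.not_tendsto_inner_normalize {v : ℕ → H} (hv : Overcomplete v)
    (hv0 : ∀ n, v n ≠ 0) :
    ¬∀ f, Tendsto (fun n => ⟪(‖v n‖⁻¹ : ℂ) • v n, f⟫_ℂ) atTop (𝓝 0) := by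
  intro hweak
  set u : ℕ → H := fun n => (‖v n‖⁻¹ : ℂ) • v n
  obtain ⟨ψ, hψ, hfar⟩ :=
    exists_strictMono_notMem_closure_span_tail (fun n => norm_smul_inv_norm (hv0 n)) hweak
  have hspan : Submodule.span ℂ (Set.range (v ∘ fun n => ψ (n + 1))) ≤
      Submodule.span ℂ (Set.range fun n => u (ψ (n + 1))) := by
    rw [Submodule.span_le]
    rintro _ ⟨n, rfl⟩
    have hscale : v (ψ (n + 1)) = (‖v (ψ (n + 1))‖ : ℂ) • u (ψ (n + 1)) := by
      simp [u, smul_smul, hv0]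
    rw [Function.comp_apply, hscale]
    exact Submodule.smul_mem _ _ (Submodule.subset_span ⟨n, rfl⟩)
  have hdense := (hv _ (hψ.comp fun m n hmn => Nat.succ_lt_succ hmn)).mono hspan
  exact hfar (hdense.closure_eq ▸ Set.mem_univ _)

end Overcomplete

namespace IsModelSpace

variable {K : Type*} [NormedAddCommGroup K] [InnerProductSpace ℂ K] [CompleteSpace K]
  {θ : ℂ → ℂ} {J : K →ₗ[ℂ] (ℂ → ℂ)} {k : ℂ → K}

theorem norm_kernel_sq (h : IsModelSpace θ J k) {l : ℂ} (hl : l ∈ Metric.ball (0 : ℂ) 1) :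
    ‖k l‖ ^ 2 = (1 - ‖θ l‖ ^ 2) / (1 - ‖l‖ ^ 2) := by
  have hconj : ∀ z : ℂ, starRingEnd ℂ z * z = ((‖z‖ ^ 2 : ℝ) : ℂ) := fun z => by
    rw [RCLike.conj_mul]; norm_cast
  rw [@norm_sq_eq_re_inner ℂ, ← h.repro _ _ hl, h.kernel_eq l hl l hl, hconj, hconj]
  norm_cast

theorem julia_quotient_le (h : IsModelSpace θ J k) {l : ℂ} (hl : l ∈ Metric.ball (0 : ℂ) 1) :
    (1 - ‖θ l‖) / (1 - ‖l‖) ≤ 2 * ‖k l‖ ^ 2 := by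
  have hl1 : ‖l‖ < 1 := mem_ball_zero_iff.mp hl
  have hθ1 : ‖θ l‖ ≤ 1 := h.theta_bdd l hl
  rw [h.norm_kernel_sq hl, mul_div_assoc', div_le_div_iff₀ (by linarith)
    (by nlinarith [norm_nonneg l])]
  have hpos : 0 ≤ (1 - ‖θ l‖) * (1 - ‖l‖) := mul_nonneg (by linarith) (by linarith)
  nlinarith [mul_nonneg hpos (by linarith [norm_nonneg (θ l)] : 0 ≤ 1 - ‖l‖ + 2 * ‖θ l‖)]

theorem tendsto_inner_normalize_kernel (h : IsModelSpace θ J k) {μ : ℕ → ℂ} {ζ : ℂ}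
    (hμ : ∀ n, μ n ∈ Metric.ball (0 : ℂ) 1) (hlim : Tendsto μ atTop (𝓝 ζ))
    (hnorm : Tendsto (fun n => ‖k (μ n)‖) atTop atTop) (f : K) :
    Tendsto (fun n => ⟪(‖k (μ n)‖⁻¹ : ℂ) • k (μ n), f⟫_ℂ) atTop (𝓝 0) := by
  refine tendsto_inner_zero_of_dense (C := 1) (fun n => ?_) h.dense_cont ?_ f
  · rw [← NNReal.coe_le_coe, coe_nnnorm, norm_smul, norm_inv, Complex.norm_real, norm_norm,
      NNReal.coe_one]
    exact inv_mul_le_one_of_le₀ le_rfl (norm_nonneg _)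
  rintro f ⟨g, hg, hgf⟩
  have hζ : ζ ∈ Metric.closedBall (0 : ℂ) 1 := Metric.isClosed_closedBall.mem_of_tendsto hlim
    (Eventually.of_forall fun n => Metric.ball_subset_closedBall (hμ n))
  have hgμ : Tendsto (fun n => g (μ n)) atTop (𝓝 (g ζ)) :=
    (hg ζ hζ).tendsto.comp (tendsto_nhdsWithin_iff.mpr
      ⟨hlim, Eventually.of_forall fun n => Metric.ball_subset_closedBall (hμ n)⟩)
  have hinner : ∀ n, ‖⟪(‖k (μ n)‖⁻¹ : ℂ) • k (μ n), f⟫_ℂ‖ = ‖g (μ n)‖ / ‖k (μ n)‖ := fun n => by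
    rw [inner_smul_left, ← h.repro f _ (hμ n), ← hgf (hμ n), norm_mul, RCLike.norm_conj,
      norm_inv, Complex.norm_real, norm_norm, inv_mul_eq_div]
  rw [tendsto_zero_iff_norm_tendsto_zero]
  simpa only [hinner] using hgμ.norm.div_atTop hnorm

end IsModelSpace

theorem stmt7_general {K : Type*} [NormedAddCommGroup K] [InnerProductSpace ℂ K] [CompleteSpace K]
    (θ : ℂ → ℂ) (J : K →ₗ[ℂ] (ℂ → ℂ)) (k : ℂ → K) (h : IsModelSpace θ J k)
    (ζ : ℂ) (L : ℕ → ℂ) (hL : ∀ n, L n ∈ Metric.ball (0 : ℂ) 1)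
    (hlim : Tendsto L atTop (nhds ζ))
    (hover : Overcomplete (fun n => k (L n))) :
    (∃ M : ℝ, ∀ n, ‖k (L n)‖ ≤ M) ∧ AhernClarkPoint θ ζ := by
  have hbdd : ∃ M : ℝ, ∀ n, ‖k (L n)‖ ≤ M := by
    by_contra hunb
    obtain ⟨φ, hφ, hgrow⟩ := exists_strictMono_natCast_lt_of_not_bddAbove
      (a := fun n => ‖k (L n)‖) fun ⟨M, hM⟩ => hunb ⟨M, fun n => hM ⟨n, rfl⟩⟩
    have hne : ∀ n, k (L (φ n)) ≠ 0 := fun n =>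
      norm_pos_iff.mp ((Nat.cast_nonneg n).trans_lt (hgrow n))
    exact (hover.comp_strictMono hφ).not_tendsto_inner_normalize hne
      (h.tendsto_inner_normalize_kernel (fun n => hL (φ n)) (hlim.comp hφ.tendsto_atTop)
        (tendsto_atTop_mono (fun n => (hgrow n).le) tendsto_natCast_atTop_atTop))
  obtain ⟨M, hM⟩ := hbdd
  refine ⟨⟨M, hM⟩, 2 * M ^ 2, ?_⟩
  have hLW : Tendsto L atTop (𝓝[Metric.ball 0 1] ζ) :=
    tendsto_nhdsWithin_iff.mpr ⟨hlim, Eventually.of_forall hL⟩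
  refine hLW.frequently (Frequently.of_forall fun n => (h.julia_quotient_le (hL n)).trans ?_)
  gcongr
  exact hM n

/-- If `λₙ → ζ ∈ 𝕋` and the reproducing kernels `{k_{λₙ}}` of the model space `K_θ` form an
overcomplete system, then `sup_n ‖k_{λₙ}‖ < ∞` and consequently `ζ` is an Ahern–Clark point
of `θ`. -/
theorem stmt7 {K : Type*} [NormedAddCommGroup K] [InnerProductSpace ℂ K] [CompleteSpace K]
    (θ : ℂ → ℂ) (J : K →ₗ[ℂ] (ℂ → ℂ)) (k : ℂ → K) (h : IsModelSpace θ J k)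
    (ζ : ℂ) (hζ : ‖ζ‖ = 1) (L : ℕ → ℂ) (hL : ∀ n, L n ∈ Metric.ball (0 : ℂ) 1)
    (hlim : Tendsto L atTop (nhds ζ))
    (hover : Overcomplete (fun n => k (L n))) :
    (∃ M : ℝ, ∀ n, ‖k (L n)‖ ≤ M) ∧ AhernClarkPoint θ ζ :=
  stmt7_general θ J k h ζ L hL hlim hover
end
end

section
/- Let {λ_n} ⊂ ℂ₊ be a lacunary sequence in a generalized Stolz domain Γ_{γ,β} = {z : Im z > γ|Re z|^β, |z| > 1} with |λ_{n+1}| > 2|λ_n|. Then the canonical product G(z) = Π_n (1 - z/λ_n) converges locally uniformly and for every N > 0, |x|^{-N}|G(x)| → ∞ as |x| → ∞ along the real axis. -/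
/-!
Since `‖λₙ‖ ≥ 2ⁿ ‖λ₀‖`, the series `∑ ‖λₙ‖⁻¹` converges, and the M-test for infinite products
gives locally uniform convergence of `G`.

For the growth along `ℝ`, fix `K` and a large real `x`, and sort the factors `|1 - x/λₙ|` by the
size of `|λₙ|`. If `2|λₙ| ≤ |x|` the factor is at least `|x|/(2|λₙ|) ≥ 1`, and the first `K` of
them already contribute `≳ |x|^K`. By lacunarity at most three `λₙ` lie in `(|x|/2, 4|x|)`; for
these the Stolz condition gives `|1 - x/λₙ| ≥ Im λₙ/|λₙ| ≳ |x|^{-(|β|+1)}`. The remaining factors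
are at least `1 - 2^{-j-2}`, so their product is at least `1/2`. Hence
`|G(x)| ≳ |x|^{K - 3(|β|+1)}` for every `K`.
-/

open Filter Topology Finset

def IsLacunary (a : ℕ → ℝ) : Prop := ∀ n, 2 * a n < a (n + 1)

namespace IsLacunary

variable {a : ℕ → ℝ}

theorem two_pow_mul_le (ha : IsLacunary a) (n j : ℕ) : 2 ^ j * a n ≤ a (n + j) := by
  induction j with
  | zero => simp
  | succ j ih =>
    calc 2 ^ (j + 1) * a n = 2 * (2 ^ j * a n) := by ring
      _ ≤ 2 * a (n + j) := by linarith
      _ ≤ a (n + (j + 1)) := (ha (n + j)).le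

theorem pos (ha : IsLacunary a) (h0 : 0 < a 0) (n : ℕ) : 0 < a n := by
  simpa using (mul_pos (pow_pos two_pos n) h0).trans_le (ha.two_pow_mul_le 0 n)

theorem monotone (ha : IsLacunary a) (h0 : 0 < a 0) : Monotone a :=
  monotone_nat_of_le_succ fun n => by linarith [ha n, ha.pos h0 n]

theorem summable_inv (ha : IsLacunary a) (h0 : 0 < a 0) : Summable fun n => (a n)⁻¹ := by
  refine Summable.of_nonneg_of_le (fun n => (inv_pos.2 (ha.pos h0 n)).le) (fun n => ?_)
    (summable_geometric_two.mul_left (a 0)⁻¹)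
  have h := ha.two_pow_mul_le 0 n
  rw [zero_add] at h
  rw [one_div, inv_pow, ← mul_inv]
  exact inv_anti₀ (by positivity) (by linarith)

theorem tendsto_atTop (ha : IsLacunary a) (h0 : 0 < a 0) : Tendsto a atTop atTop :=
  tendsto_atTop_mono (fun n => by simpa using ha.two_pow_mul_le 0 n)
    ((tendsto_pow_atTop_atTop_of_one_lt one_lt_two).atTop_mul_const h0)

theorem exists_index (ha : IsLacunary a) (h0 : 0 < a 0) {t : ℝ} (K : ℕ) (ht : a (K + 2) ≤ t) :
    ∃ L, K ≤ L ∧ (∀ n < L, 2 * a n ≤ t) ∧ a (L + 2) < 4 * t ∧ 4 * t ≤ a (L + 3) := by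
  classical
  have hex : ∃ M, 4 * t ≤ a M := (ha.tendsto_atTop h0).eventually_ge_atTop _ |>.exists
  have hfirst : ∀ n < Nat.find hex, a n < 4 * t := fun n hn => not_le.1 (Nat.find_min hex hn)
  have hKM : K + 3 ≤ Nat.find hex := by
    refine (Nat.le_find_iff hex _).2 fun n hn => not_le.2 ?_
    linarith [ha.monotone h0 (show n ≤ K + 2 by omega), ha.pos h0 (K + 2)]
  obtain ⟨L, hL⟩ : ∃ L, Nat.find hex = L + 3 := ⟨_, (Nat.sub_add_cancel (by omega)).symm⟩
  refine ⟨L, by omega, fun n hn => ?_, hfirst _ (by omega), hL ▸ Nat.find_spec hex⟩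
  linarith [ha.two_pow_mul_le n 3, hfirst (n + 3) (by omega), ha.pos h0 n]

end IsLacunary

theorem Finset.one_sub_sum_le_prod_one_sub {ι : Type*} (s : Finset ι) {f : ι → ℝ}
    (h0 : ∀ i ∈ s, 0 ≤ f i) (h1 : ∀ i ∈ s, f i ≤ 1) :
    1 - ∑ i ∈ s, f i ≤ ∏ i ∈ s, (1 - f i) := by
  classical
  induction s using Finset.induction_on with
  | empty => simp
  | insert i s hi ih =>
    rw [prod_insert hi, sum_insert hi]
    have ih := ih (fun j hj => h0 j (mem_insert_of_mem hj))
      (fun j hj => h1 j (mem_insert_of_mem hj))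
    have hs : 0 ≤ ∑ j ∈ s, f j := sum_nonneg fun j hj => h0 j (mem_insert_of_mem hj)
    nlinarith [h0 i (mem_insert_self i s), h1 i (mem_insert_self i s)]

section NormedField

variable {𝕜 : Type*} [NormedField 𝕜]

theorem hasProdLocallyUniformly_one_sub_div [ProperSpace 𝕜] {w : ℕ → 𝕜}
    (hw : Summable fun n => ‖w n‖⁻¹) :
    HasProdLocallyUniformly (fun n z => 1 - z / w n) (fun z => ∏' n, (1 - z / w n)) := by
  refine hasProdLocallyUniformly_of_forall_compact fun K hK => ?_
  obtain ⟨R, hR⟩ := hK.isBounded.exists_norm_le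
  simpa only [← sub_eq_add_neg] using
    Summable.hasProdUniformlyOn_nat_one_add (f := fun n z => -(z / w n)) hK (hw.mul_left R)
      (Eventually.of_forall fun n z hz => by
        simpa [norm_div, div_eq_mul_inv] using
          mul_le_mul_of_nonneg_right (hR z hz) (inv_nonneg.2 (norm_nonneg (w n))))
      (fun n => by fun_prop)

theorem norm_div_sub_one_le_norm_one_sub_div (z w : 𝕜) : ‖z‖ / ‖w‖ - 1 ≤ ‖1 - z / w‖ := by
  simpa [norm_div, norm_sub_rev] using norm_sub_norm_le (z / w) 1

theorem one_sub_norm_div_le_norm_one_sub_div (z w : 𝕜) : 1 - ‖z‖ / ‖w‖ ≤ ‖1 - z / w‖ := by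
  simpa [norm_div] using norm_sub_norm_le 1 (z / w)

theorem div_two_mul_le_norm_one_sub_div {z w : 𝕜} (h : 2 * ‖w‖ ≤ ‖z‖) :
    ‖z‖ / (2 * ‖w‖) ≤ ‖1 - z / w‖ := by
  rcases eq_or_ne w 0 with rfl | hw
  · simp
  have h2 : 2 ≤ ‖z‖ / ‖w‖ := (le_div_iff₀ (norm_pos_iff.2 hw)).2 h
  calc ‖z‖ / (2 * ‖w‖) = ‖z‖ / ‖w‖ / 2 := by rw [div_div, mul_comm]
    _ ≤ ‖z‖ / ‖w‖ - 1 := by linarith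
    _ ≤ ‖1 - z / w‖ := norm_div_sub_one_le_norm_one_sub_div z w

theorem one_le_norm_one_sub_div {z w : 𝕜} (h : 2 * ‖w‖ ≤ ‖z‖) : 1 ≤ ‖1 - z / w‖ := by
  rcases eq_or_ne w 0 with rfl | hw
  · simp
  have h2 : 2 ≤ ‖z‖ / ‖w‖ := (le_div_iff₀ (norm_pos_iff.2 hw)).2 h
  linarith [norm_div_sub_one_le_norm_one_sub_div z w]

theorem pow_mul_prod_inv_le_prod_norm_one_sub_div {z : 𝕜} {w : ℕ → 𝕜} {K L : ℕ} (hKL : K ≤ L)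
    (h : ∀ n < L, 2 * ‖w n‖ ≤ ‖z‖) :
    ‖z‖ ^ K * ∏ n ∈ range K, (2 * ‖w n‖)⁻¹ ≤ ∏ n ∈ range L, ‖1 - z / w n‖ :=
  calc ‖z‖ ^ K * ∏ n ∈ range K, (2 * ‖w n‖)⁻¹ = ∏ n ∈ range K, ‖z‖ / (2 * ‖w n‖) := by
        simp only [div_eq_mul_inv, prod_mul_distrib, prod_const, card_range]
    _ ≤ ∏ n ∈ range K, ‖1 - z / w n‖ := prod_le_prod (fun _ _ => by positivity)
        fun n hn => div_two_mul_le_norm_one_sub_div (h n (by simp at hn; omega))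
    _ ≤ ∏ n ∈ range L, ‖1 - z / w n‖ := prod_le_prod_of_subset_of_one_le
        (range_subset_range.2 hKL) (fun _ _ => norm_nonneg _)
        fun n hn _ => one_le_norm_one_sub_div (h n (mem_range.1 hn))

theorem one_half_le_prod_norm_one_sub_div {z : 𝕜} {w : ℕ → 𝕜}
    (hw : ∀ j, 2 ^ (j + 2) * ‖z‖ ≤ ‖w j‖) (m : ℕ) :
    1 / 2 ≤ ∏ j ∈ range m, ‖1 - z / w j‖ := by
  have hq : ∀ j, (1 / 2 : ℝ) ^ (j + 2) ≤ 1 := fun j => pow_le_one₀ (by norm_num) (by norm_num)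
  have hfactor : ∀ j, 1 - (1 / 2 : ℝ) ^ (j + 2) ≤ ‖1 - z / w j‖ := fun j => by
    have : ‖z‖ / ‖w j‖ ≤ (1 / 2) ^ (j + 2) := by
      refine div_le_of_le_mul₀ (norm_nonneg _) (by positivity) ?_
      calc ‖z‖ = (1 / 2) ^ (j + 2) * (2 ^ (j + 2) * ‖z‖) := by
            rw [← mul_assoc, ← mul_pow]; norm_num
        _ ≤ (1 / 2) ^ (j + 2) * ‖w j‖ := by gcongr; exact hw j
    linarith [one_sub_norm_div_le_norm_one_sub_div z (w j)]
  have hsum : ∑ j ∈ range m, (1 / 2 : ℝ) ^ (j + 2) ≤ 1 / 2 := by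
    simp_rw [pow_add, ← sum_mul]
    nlinarith [sum_geometric_two_le m]
  calc (1 / 2 : ℝ) ≤ 1 - ∑ j ∈ range m, (1 / 2 : ℝ) ^ (j + 2) := by linarith
    _ ≤ ∏ j ∈ range m, (1 - (1 / 2 : ℝ) ^ (j + 2)) :=
      one_sub_sum_le_prod_one_sub _ (fun j _ => by positivity) (fun j _ => hq j)
    _ ≤ ∏ j ∈ range m, ‖1 - z / w j‖ :=
      prod_le_prod (fun j _ => sub_nonneg.2 (hq j)) (fun j _ => hfactor j)

theorem IsLacunary.le_norm_tprod_one_sub_div [ProperSpace 𝕜] {w : ℕ → 𝕜}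
    (hw : IsLacunary (‖w ·‖)) (h0 : 0 < ‖w 0‖) {b c : ℝ} (hb : 0 ≤ b) (hc : 0 ≤ c) (K : ℕ)
    {z : 𝕜} (hz : ‖w (K + 2)‖ ≤ ‖z‖) (hfac : ∀ n, c * ‖w n‖ ^ (-b) ≤ ‖1 - z / w n‖) :
    ‖z‖ ^ K * (∏ n ∈ range K, (2 * ‖w n‖)⁻¹) * (c * (4 * ‖z‖) ^ (-b)) ^ 3 * (1 / 2)
      ≤ ‖∏' n, (1 - z / w n)‖ := by
  obtain ⟨L, hKL, hhead, hmid, htail⟩ := hw.exists_index h0 K hz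
  have hprod := (hasProdLocallyUniformly_one_sub_div (hw.summable_inv h0)).hasProd (x := z)
  refine ge_of_tendsto hprod.norm.tendsto_prod_nat (eventually_atTop.2 ⟨L + 3, fun m hm => ?_⟩)
  obtain ⟨k, rfl⟩ := Nat.exists_eq_add_of_le hm
  have hfront := pow_mul_prod_inv_le_prod_norm_one_sub_div hKL hhead
  have hmiddle : (c * (4 * ‖z‖) ^ (-b)) ^ 3 ≤ ∏ i ∈ range 3, ‖1 - z / w (L + i)‖ := by
    calc _ = ∏ _i ∈ range 3, c * (4 * ‖z‖) ^ (-b) := by simp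
      _ ≤ _ := prod_le_prod (fun _ _ => by positivity) fun i hi => by
          have hi : L + i ≤ L + 2 := by simp at hi; omega
          refine (mul_le_mul_of_nonneg_left ?_ hc).trans (hfac _)
          exact Real.rpow_le_rpow_of_nonpos (hw.pos h0 _) ((hw.monotone h0 hi).trans hmid.le)
            (neg_nonpos.2 hb)
  have hback : 1 / 2 ≤ ∏ j ∈ range k, ‖1 - z / w (L + 3 + j)‖ :=
    one_half_le_prod_norm_one_sub_div (fun j =>
      calc 2 ^ (j + 2) * ‖z‖ = 2 ^ j * (4 * ‖z‖) := by ring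
        _ ≤ 2 ^ j * ‖w (L + 3)‖ := by gcongr
        _ ≤ ‖w (L + 3 + j)‖ := hw.two_pow_mul_le _ _) k
  rw [prod_range_add, prod_range_add]
  gcongr

theorem IsLacunary.exists_mul_rpow_le_norm_tprod_one_sub_div [ProperSpace 𝕜] {w : ℕ → 𝕜}
    (hw : IsLacunary (‖w ·‖)) (h0 : 0 < ‖w 0‖) {b c : ℝ} (hb : 0 ≤ b) (hc : 0 < c) (K : ℕ) :
    ∃ C > 0, ∀ z : 𝕜, ‖w (K + 2)‖ ≤ ‖z‖ → (∀ n, c * ‖w n‖ ^ (-b) ≤ ‖1 - z / w n‖) →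
      C * ‖z‖ ^ ((K : ℝ) - 3 * b) ≤ ‖∏' n, (1 - z / w n)‖ := by
  refine ⟨(∏ n ∈ range K, (2 * ‖w n‖)⁻¹) * (c * 4 ^ (-b)) ^ 3 / 2,
    div_pos (mul_pos (prod_pos fun n _ => inv_pos.2 (mul_pos two_pos (hw.pos h0 n)))
      (by positivity)) two_pos, fun z hz hfac => ?_⟩
  have hz0 : 0 < ‖z‖ := (hw.pos h0 _).trans_le hz
  have hrpow : ‖z‖ ^ ((K : ℝ) - 3 * b) = ‖z‖ ^ K * (4 ^ b * (4 * ‖z‖) ^ (-b)) ^ 3 := by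
    rw [Real.mul_rpow (by norm_num) hz0.le, ← mul_assoc, ← Real.rpow_add (by norm_num),
      add_neg_cancel, Real.rpow_zero, one_mul, ← Real.rpow_natCast, ← Real.rpow_natCast,
      ← Real.rpow_mul hz0.le, ← Real.rpow_add hz0]
    ring_nf
  calc _ = ‖z‖ ^ K * (∏ n ∈ range K, (2 * ‖w n‖)⁻¹) * (c * (4 * ‖z‖) ^ (-b)) ^ 3 * (1 / 2) := by
        rw [hrpow, Real.rpow_neg (by norm_num)]
        field_simp
    _ ≤ _ := hw.le_norm_tprod_one_sub_div h0 hb hc.le K hz hfac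

end NormedField

theorem tendsto_rpow_neg_mul_comap_abs_atTop {g : ℝ → ℝ} {d : ℝ}
    (h : ∀ K : ℕ, ∃ C > 0, ∀ᶠ x in comap (fun x : ℝ => |x|) atTop, C * |x| ^ ((K : ℝ) - d) ≤ g x)
    (N : ℝ) :
    Tendsto (fun x => |x| ^ (-N) * g x) (comap (fun x : ℝ => |x|) atTop) atTop := by
  obtain ⟨C, hC, hg⟩ := h (⌈N + d⌉₊ + 1)
  have he : 0 < (↑(⌈N + d⌉₊ + 1) : ℝ) - d - N := by push_cast; linarith [Nat.le_ceil (N + d)]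
  have habs : Tendsto (fun x : ℝ => |x|) (comap (fun x : ℝ => |x|) atTop) atTop := tendsto_comap
  refine tendsto_atTop_mono' _ ?_ (((tendsto_rpow_atTop he).comp habs).const_mul_atTop hC)
  filter_upwards [hg, habs.eventually_gt_atTop 0] with x hx hx0
  calc C * |x| ^ ((↑(⌈N + d⌉₊ + 1) : ℝ) - d - N)
      = |x| ^ (-N) * (C * |x| ^ ((↑(⌈N + d⌉₊ + 1) : ℝ) - d)) := by
        rw [mul_left_comm, ← Real.rpow_add hx0]; ring_nf
    _ ≤ |x| ^ (-N) * g x := by gcongr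

def generalizedStolzDomain (γ β : ℝ) : Set ℂ := {z | 1 < ‖z‖ ∧ γ * |z.re| ^ β < z.im}

theorem exists_mul_rpow_le_im {γ : ℝ} (hγ : 0 < γ) (β : ℝ) :
    ∃ c > 0, ∀ z ∈ generalizedStolzDomain γ β, c * ‖z‖ ^ (-|β|) ≤ z.im := by
  refine ⟨min (1 / 2) (γ * (1 / 2) ^ |β|), by positivity, fun z ⟨hz1, hzim⟩ => ?_⟩
  set c := min (1 / 2 : ℝ) (γ * (1 / 2) ^ |β|)
  have hpow : ‖z‖ ^ (-|β|) ≤ 1 :=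
    Real.rpow_le_one_of_one_le_of_nonpos hz1.le (neg_nonpos.2 (abs_nonneg β))
  have him : 0 < z.im := (mul_nonneg hγ.le (Real.rpow_nonneg (abs_nonneg _) _)).trans_lt hzim
  by_cases hcase : ‖z‖ / 2 ≤ z.im
  · calc c * ‖z‖ ^ (-|β|) ≤ 1 / 2 * 1 :=
          mul_le_mul (min_le_left _ _) hpow (by positivity) (by norm_num)
      _ ≤ z.im := by linarith
  -- otherwise the real part dominates and the Stolz condition bounds `z.im` from below
  have hre : ‖z‖ / 2 < |z.re| := by
    linarith [Complex.norm_le_abs_re_add_abs_im z, abs_of_pos him]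
  rcases le_or_gt 0 β with hβ | hβ
  · calc c * ‖z‖ ^ (-|β|) ≤ γ * (1 / 2) ^ |β| * 1 :=
          mul_le_mul (min_le_right _ _) hpow (by positivity) (by positivity)
      _ ≤ γ * |z.re| ^ β := by
          rw [mul_one, abs_of_nonneg hβ]
          exact mul_le_mul_of_nonneg_left (Real.rpow_le_rpow (by norm_num) (by linarith) hβ) hγ.le
      _ ≤ z.im := hzim.le
  · have hc : c ≤ γ := (min_le_right _ _).trans
      (mul_le_of_le_one_right hγ.le (Real.rpow_le_one (by norm_num) (by norm_num) (abs_nonneg β)))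
    calc c * ‖z‖ ^ (-|β|) ≤ γ * ‖z‖ ^ β := by
          rw [abs_of_neg hβ, neg_neg]
          exact mul_le_mul_of_nonneg_right hc (by positivity)
      _ ≤ γ * |z.re| ^ β := mul_le_mul_of_nonneg_left
          (Real.rpow_le_rpow_of_nonpos (by linarith) (Complex.abs_re_le_norm z) hβ.le) hγ.le
      _ ≤ z.im := hzim.le

theorem im_div_norm_le_norm_one_sub_ofReal_div (x : ℝ) (w : ℂ) : w.im / ‖w‖ ≤ ‖1 - x / w‖ := by
  rcases eq_or_ne w 0 with rfl | hw
  · simp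
  rw [show 1 - (x : ℂ) / w = (w - x) / w by field_simp, norm_div]
  gcongr
  calc w.im = (w - x).im := by simp
    _ ≤ ‖w - x‖ := (le_abs_self _).trans (Complex.abs_im_le_norm _)

theorem exists_mul_rpow_le_norm_one_sub_ofReal_div {γ : ℝ} (hγ : 0 < γ) (β : ℝ) :
    ∃ c > 0, ∀ w ∈ generalizedStolzDomain γ β, ∀ x : ℝ,
      c * ‖w‖ ^ (-(|β| + 1)) ≤ ‖1 - x / w‖ := by
  obtain ⟨c, hc, hcw⟩ := exists_mul_rpow_le_im hγ β
  refine ⟨c, hc, fun w hw x => ?_⟩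
  have hpos : 0 < ‖w‖ := one_pos.trans hw.1
  calc c * ‖w‖ ^ (-(|β| + 1)) = c * ‖w‖ ^ (-|β|) / ‖w‖ := by
        rw [neg_add, Real.rpow_add hpos, Real.rpow_neg_one]; ring
    _ ≤ w.im / ‖w‖ := by gcongr; exact hcw w hw
    _ ≤ ‖1 - x / w‖ := im_div_norm_le_norm_one_sub_ofReal_div x w

/-- Let `{λₙ} ⊂ ℂ₊` be a lacunary sequence (`|λ_{n+1}| > 2|λₙ|`) contained in a generalized
Stolz domain `Γ_{γ,β} = {z : Im z > γ|Re z|^β, |z| > 1}`.  Then the canonical product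
`G(z) = Π_n (1 - z/λₙ)` converges locally uniformly, and for every `N > 0`,
`|x|^{-N}|G(x)| → ∞` as `|x| → ∞` along the real axis. -/
theorem stmt8 (γ β : ℝ) (hγ : 0 < γ) (lam : ℕ → ℂ)
    (hmem : ∀ n, 1 < ‖lam n‖ ∧ γ * |(lam n).re| ^ β < (lam n).im)
    (hlac : ∀ n, 2 * ‖lam n‖ < ‖lam (n + 1)‖) :
    (∀ z : ℂ, Multipliable (fun n => 1 - z / lam n)) ∧
    TendstoLocallyUniformly (fun (N : ℕ) (z : ℂ) => ∏ n ∈ Finset.range N, (1 - z / lam n))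
      (fun z => ∏' n, (1 - z / lam n)) atTop ∧
    ∀ N : ℝ, 0 < N →
      Tendsto (fun x : ℝ => |x| ^ (-N) * ‖∏' n, (1 - (x : ℂ) / lam n)‖)
        (comap (fun x : ℝ => |x|) atTop) atTop := by
  have hlac : IsLacunary (‖lam ·‖) := hlac
  have h0 : 0 < ‖lam 0‖ := one_pos.trans (hmem 0).1
  have hprod := hasProdLocallyUniformly_one_sub_div (hlac.summable_inv h0)
  obtain ⟨c, hc, hfac⟩ := exists_mul_rpow_le_norm_one_sub_ofReal_div hγ β
  refine ⟨fun z => hprod.hasProd.multipliable, ?_, fun N _ => ?_⟩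
  · rw [← tendstoLocallyUniformlyOn_univ]
    exact hprod.hasProdLocallyUniformlyOn.tendstoLocallyUniformlyOn_finsetRange
  refine tendsto_rpow_neg_mul_comap_abs_atTop (d := 3 * (|β| + 1)) (fun K => ?_) N
  obtain ⟨C, hC, hgrowth⟩ :=
    hlac.exists_mul_rpow_le_norm_tprod_one_sub_div h0 (b := |β| + 1) (by positivity) hc K
  refine ⟨C, hC, ?_⟩
  filter_upwards [tendsto_comap.eventually_ge_atTop ‖lam (K + 2)‖] with x hx
  simpa using hgrowth x (by simpa using hx) fun n => hfac _ (hmem n) x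
end

section
/- Let σ be a finite positive measure on 𝕋 with σ({1}) = 0 and (1-ζ)^{-k} ∈ L²(σ) for all k ≥ 1, and let h ∈ L²(σ). If ∫_𝕋 \bar{ζ}^n h(ζ)/(1-\bar{ζ})^{n+1} dσ(ζ) = 0 for all n ≥ 0, then ∫_𝕋 h(ζ)/(1-\bar{ζ})^{n+1} dσ(ζ) = 0 for all n ≥ 0. -/
open MeasureTheory

/-!
Put `w(ζ) = (1 - ζ̄)⁻¹`. Away from `ζ = 1` we have `ζ̄ w = w - 1`, so the hypothesis says that
`∫ (w - 1)ⁿ (w h) dσ = 0` for every `n`. Expanding `wⁿ = ((w - 1) + 1)ⁿ` binomially gives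
`∫ wⁿ (w h) dσ = 0`, which is the claim.
-/

theorem add_pow_mul_eq_sum {R : Type*} [CommSemiring R] (a c b : R) (n : ℕ) :
    (a + c) ^ n * b = ∑ j ∈ Finset.range (n + 1), c ^ (n - j) * n.choose j * (a ^ j * b) := by
  rw [add_pow, Finset.sum_mul]
  exact Finset.sum_congr rfl fun j _ => by ring

theorem inv_one_sub_add_neg_one {K : Type*} [Field K] {z : K} (hz : z ≠ 1) :
    (1 - z)⁻¹ + -1 = z * (1 - z)⁻¹ := by
  have : 1 - z ≠ 0 := sub_ne_zero.2 hz.symm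
  field_simp
  ring

section PolynomialMoments

variable {α 𝕜 : Type*} [MeasurableSpace α] [RCLike 𝕜] {μ : Measure α} {f g : α → 𝕜}

theorem integrable_add_const_pow_mul (hint : ∀ k : ℕ, Integrable (fun x => f x ^ k * g x) μ)
    (c : 𝕜) (n : ℕ) : Integrable (fun x => (f x + c) ^ n * g x) μ := by
  simp_rw [add_pow_mul_eq_sum]
  exact integrable_finsetSum _ fun j _ => (hint j).const_mul _

theorem integral_add_const_pow_mul_eq_zero (hint : ∀ k : ℕ, Integrable (fun x => f x ^ k * g x) μ)
    (hzero : ∀ k : ℕ, ∫ x, f x ^ k * g x ∂μ = 0) (c : 𝕜) (n : ℕ) :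
    ∫ x, (f x + c) ^ n * g x ∂μ = 0 := by
  simp_rw [add_pow_mul_eq_sum]
  rw [integral_finsetSum _ fun j _ => (hint j).const_mul _]
  exact Finset.sum_eq_zero fun j _ => by rw [integral_const_mul, hzero, mul_zero]

end PolynomialMoments

theorem stmt13_general (σ : Measure ℂ) [IsFiniteMeasure σ]
    (hpt : σ {(1 : ℂ)} = 0)
    (hmem : ∀ k : ℕ, MemLp (fun ξ : ℂ => ((1 - ξ)⁻¹) ^ (k + 1)) 2 σ)
    (h : ℂ → ℂ) (hh : MemLp h 2 σ)
    (horth : ∀ n : ℕ,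
      ∫ ξ, ((starRingEnd ℂ) ξ) ^ n * h ξ / (1 - (starRingEnd ℂ) ξ) ^ (n + 1) ∂σ = 0) :
    ∀ n : ℕ, ∫ ξ, h ξ / (1 - (starRingEnd ℂ) ξ) ^ (n + 1) ∂σ = 0 := by
  set w : ℂ → ℂ := fun ξ => (1 - (starRingEnd ℂ) ξ)⁻¹
  have hint : ∀ k : ℕ, Integrable (fun ξ => w ξ ^ k * (w ξ * h ξ)) σ := fun k => by
    refine ((hmem k).star.integrable_mul hh).congr (ae_of_all _ fun ξ => ?_)
    simp only [Pi.mul_apply, Pi.star_apply, star_pow, star_inv₀, star_sub, star_one,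
      Complex.star_def, w]
    ring
  have hne : ∀ᵐ ξ ∂σ, ξ ≠ 1 := by
    simpa using measure_eq_zero_iff_ae_notMem.1 hpt
  have hshift : ∀ n : ℕ, ∫ ξ, (w ξ + -1) ^ n * (w ξ * h ξ) ∂σ = 0 := fun n => by
    rw [← horth n]
    refine integral_congr_ae (hne.mono fun ξ hξ => ?_)
    have hw : w ξ + -1 = starRingEnd ℂ ξ * w ξ :=
      inv_one_sub_add_neg_one ((map_ne_one_iff _ (RingHom.injective _)).2 hξ)
    dsimp only
    rw [hw, mul_pow]
    simp only [w, div_eq_mul_inv, ← inv_pow]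
    ring
  intro n
  rw [← integral_add_const_pow_mul_eq_zero
    (fun k => integrable_add_const_pow_mul hint (-1) k) hshift 1 n]
  refine integral_congr_ae (ae_of_all _ fun ξ => ?_)
  simp only [w, div_eq_mul_inv, ← inv_pow]
  ring

/-- Let `σ` be a finite positive measure on the circle with `σ({1}) = 0` and
`(1-ζ)^{-k} ∈ L²(σ)` for all `k ≥ 1`, and let `h ∈ L²(σ)`.  If
`∫ conj(ζ)^n h(ζ)/(1-conj(ζ))^{n+1} dσ = 0` for all `n ≥ 0`, then
`∫ h(ζ)/(1-conj(ζ))^{n+1} dσ = 0` for all `n ≥ 0`. -/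
theorem stmt13 (σ : Measure ℂ) [IsFiniteMeasure σ]
    (hsupp : ∀ᵐ ξ ∂σ, ‖ξ‖ = 1) (hpt : σ {(1 : ℂ)} = 0)
    (hmem : ∀ k : ℕ, MemLp (fun ξ : ℂ => ((1 - ξ)⁻¹) ^ (k + 1)) 2 σ)
    (h : ℂ → ℂ) (hh : MemLp h 2 σ)
    (horth : ∀ n : ℕ,
      ∫ ξ, ((starRingEnd ℂ) ξ) ^ n * h ξ / (1 - (starRingEnd ℂ) ξ) ^ (n + 1) ∂σ = 0) :
    ∀ n : ℕ, ∫ ξ, h ξ / (1 - (starRingEnd ℂ) ξ) ^ (n + 1) ∂σ = 0 :=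
  stmt13_general σ hpt hmem h hh horth
end
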